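/- arXiv:2301.08142 — 13 statements merged into one kernel-verified Lean document; each statement's English description precedes it below -/
import Mathlib

section
/- The real number e = ∑_{n=0}^∞ 1/n! is transcendental over ℚ, i.e. there is no nonzero polynomial with rational coefficients having e as a root. -/
/-!
Hermite's argument. Suppose `a₀ + a₁ e + ⋯ + a_N e^N = 0` with integers `aₖ` and `a₀ ≠ 0`.
Applied to the polynomial `(X - 1)⋯(X - N)`, the analytic part of Lindemann–Weierstrass gives,
for every large prime `p`, an integer `n` prime to `p` such that each `n eᵏ` (`1 ≤ k ≤ N`) lies
within `cᵖ / (p - 1)!` of a multiple of `p`. Substituting these multiples into `n` times the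
relation leaves an integer congruent to `a₀ n ≢ 0` modulo `p`, yet of absolute value below `1`.
-/

open Polynomial
open scoped Nat

theorem Int.not_prime_dvd_mul_add_mul {p : ℕ} (hp : p.Prime) {a n : ℤ} (ha : a ≠ 0)
    (hap : a.natAbs < p) (hn : ¬ (p : ℤ) ∣ n) (m : ℤ) : ¬ (p : ℤ) ∣ a * n + p * m := by
  rw [dvd_add_left (dvd_mul_right _ _)]
  intro hdvd
  rcases (Nat.prime_iff_prime_int.1 hp).dvd_or_dvd hdvd with hpa | hpn
  · exact ha (Int.eq_zero_of_dvd_of_natAbs_lt_natAbs hpa hap)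
  · exact hn hpn

theorem Polynomial.exists_coeff_zero_ne_zero_aeval_eq_zero {R A : Type*} [CommRing R]
    [CommRing A] [IsDomain A] [Algebra R A] {x : A} (hx0 : x ≠ 0) (hx : IsAlgebraic R x) :
    ∃ g : R[X], g.coeff 0 ≠ 0 ∧ aeval x g = 0 := by
  obtain ⟨g, hg0, hg⟩ := hx
  obtain ⟨q, hgq, hq⟩ := g.exists_eq_pow_rootMultiplicity_mul_and_not_dvd hg0 0
  refine ⟨q, by simpa [X_dvd_iff] using hq, ?_⟩
  rw [hgq] at hg
  simpa [hx0] using hg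

theorem exists_prime_mul_pow_div_factorial_lt_one (K c B : ℝ) :
    ∃ p : ℕ, p.Prime ∧ B < p ∧ K * (c ^ p / (p - 1)!) < 1 := by
  have hlim : Filter.Tendsto (fun p : ℕ => K * (c ^ p / (p - 1)!)) Filter.atTop (nhds 0) := by
    rw [← Filter.tendsto_add_atTop_iff_nat 1]
    convert (FloorSemiring.tendsto_pow_div_factorial_atTop c).const_mul (K * c) using 2
    · rw [add_tsub_cancel_right, pow_succ]; ring
    · simp
  obtain ⟨N, hN⟩ := Filter.eventually_atTop.1 (hlim.eventually_lt_const one_pos)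
  obtain ⟨p, hNp, hp⟩ := Nat.exists_infinite_primes (max N ⌈B⌉₊ + 1)
  refine ⟨p, hp, Nat.lt_of_ceil_lt (by omega), hN p (by omega)⟩

theorem Real.exists_int_approx_exp_succ (N : ℕ) :
    ∃ c B : ℝ, ∀ p : ℕ, B < p → p.Prime → ∃ n : ℤ, ¬ (p : ℤ) ∣ n ∧ ∃ m : ℕ → ℤ,
      ∀ k < N, |n * Real.exp (k + 1) - p * m k| ≤ c ^ p / (p - 1)! := by
  set f : ℤ[X] := ∏ k ∈ Finset.range N, (X - C ((k : ℤ) + 1))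
  have hf0 : f.eval 0 ≠ 0 := by
    simp only [f, eval_prod, eval_sub, eval_X, eval_C, zero_sub]
    exact Finset.prod_ne_zero_iff.2 fun k _ => by omega
  have hroot : ∀ k < N, ((k : ℂ) + 1) ∈ f.aroots ℂ := by
    intro k hk
    rw [mem_aroots]
    refine ⟨(monic_prod_of_monic _ _ fun k _ => monic_X_sub_C _).ne_zero, ?_⟩
    simp only [f, map_prod, map_sub, aeval_X, aeval_C]
    exact Finset.prod_eq_zero (Finset.mem_range.2 hk) (by simp)
  obtain ⟨c, hc⟩ := LindemannWeierstrass.exp_polynomial_approx f hf0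
  refine ⟨c, (f.eval 0).natAbs, fun p hpB hp => ?_⟩
  obtain ⟨n, hpn, gp, -, hgp⟩ := hc p (by exact_mod_cast hpB) hp
  refine ⟨n, hpn, fun k => gp.eval ((k : ℤ) + 1), fun k hk => ?_⟩
  have happrox := hgp (hroot k hk)
  have hint : aeval ((k : ℂ) + 1) gp = ((gp.eval ((k : ℤ) + 1) : ℤ) : ℂ) := by
    simpa using aeval_algebraMap_apply ℂ ((k : ℤ) + 1) gp
  rw [zsmul_eq_mul, nsmul_eq_mul, hint] at happrox
  rw [← Real.norm_eq_abs, ← Complex.norm_real]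
  push_cast
  exact happrox

theorem Real.sum_range_intCast_mul_exp_ne_zero (a : ℕ → ℤ) (ha : a 0 ≠ 0) (N : ℕ) :
    ∑ k ∈ Finset.range (N + 1), (a k : ℝ) * Real.exp k ≠ 0 := by
  intro hsum
  obtain ⟨c, B, happrox⟩ := Real.exists_int_approx_exp_succ N
  set K := ∑ k ∈ Finset.range N, |(a (k + 1) : ℝ)|
  obtain ⟨p, hp, hBp, hsmall⟩ :=
    exists_prime_mul_pow_div_factorial_lt_one K c (max B (a 0).natAbs)
  rw [max_lt_iff, Nat.cast_lt] at hBp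
  obtain ⟨n, hpn, m, hm⟩ := happrox p hBp.1 hp
  set z : ℤ := a 0 * n + p * ∑ k ∈ Finset.range N, a (k + 1) * m k
  have hz : z ≠ 0 := fun h0 =>
    Int.not_prime_dvd_mul_add_mul hp ha hBp.2 hpn _ (h0 ▸ dvd_zero _)
  have hz_eq : (z : ℝ) = -∑ k ∈ Finset.range N,
      a (k + 1) * (n * Real.exp (k + 1) - p * m k) := by
    have hsum' : ∑ k ∈ Finset.range N, (a (k + 1) : ℝ) * Real.exp (k + 1) = -a 0 := by
      rw [Finset.sum_range_succ'] at hsum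
      push_cast at hsum
      rw [Real.exp_zero, mul_one] at hsum
      linarith
    have hsplit : ∑ k ∈ Finset.range N, (a (k + 1) : ℝ) * (n * Real.exp (k + 1) - p * m k) =
        n * ∑ k ∈ Finset.range N, (a (k + 1) : ℝ) * Real.exp (k + 1) -
          p * ∑ k ∈ Finset.range N, (a (k + 1) : ℝ) * m k := by
      rw [Finset.mul_sum, Finset.mul_sum, ← Finset.sum_sub_distrib]
      exact Finset.sum_congr rfl fun k _ => by ring
    rw [hsplit, hsum']
    push_cast [z]
    ring
  have hz_lt : |(z : ℝ)| < 1 := calc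
    |(z : ℝ)| ≤ ∑ k ∈ Finset.range N, |(a (k + 1) : ℝ)| * (c ^ p / (p - 1)!) := by
      rw [hz_eq, abs_neg]
      refine (Finset.abs_sum_le_sum_abs _ _).trans (Finset.sum_le_sum fun k hk => ?_)
      rw [abs_mul]
      exact mul_le_mul_of_nonneg_left (hm k (Finset.mem_range.1 hk)) (abs_nonneg _)
    _ = K * (c ^ p / (p - 1)!) := by rw [Finset.sum_mul]
    _ < 1 := hsmall
  exact hz (Int.abs_lt_one_iff.1 (by exact_mod_cast hz_lt))

theorem Polynomial.aeval_exp_one_ne_zero {g : ℤ[X]} (hg : g.coeff 0 ≠ 0) :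
    aeval (Real.exp 1) g ≠ 0 := by
  rw [aeval_eq_sum_range]
  simpa [← Real.exp_nat_mul] using Real.sum_range_intCast_mul_exp_ne_zero g.coeff hg g.natDegree

theorem Real.transcendental_exp_one : Transcendental ℚ (Real.exp 1) := fun halg =>
  have ⟨_, hcoeff, hroot⟩ := exists_coeff_zero_ne_zero_aeval_eq_zero (Real.exp_pos 1).ne'
    ((IsFractionRing.isAlgebraic_iff ℤ ℚ ℝ).2 halg)
  aeval_exp_one_ne_zero hcoeff hroot

theorem Real.tsum_one_div_factorial : ∑' n : ℕ, (1 : ℝ) / n ! = Real.exp 1 := by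
  simp [Real.exp_eq_exp_ℝ, NormedSpace.exp_eq_tsum_div]

/-- The real number e = ∑_{n=0}^∞ 1/n! is transcendental over ℚ: there is no
nonzero polynomial with rational coefficients having it as a root. -/
theorem e_transcendental :
    Transcendental ℚ (∑' n : ℕ, (1 : ℝ) / (n.factorial : ℝ)) := by
  rw [Real.tsum_one_div_factorial]
  exact Real.transcendental_exp_one
end

section
/- Let M ⊆ ℚ be a nonempty bounded set and let f : M → ℝ be uniformly continuous. Then there exist real numbers y and y' close to M such that f(y) ≤ f(a) ≤ f(y') for every a ∈ M, where f(y) and f(y') denote the extended values of f at y and y'. -/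
open Filter Topology

/-- Uniform continuity of f : M → ℝ for M ⊆ ℚ. -/
def UC (M : Set ℚ) (f : ℚ → ℝ) : Prop :=
  ∀ ε : ℝ, 0 < ε → ∃ δ : ℝ, 0 < δ ∧
    ∀ a ∈ M, ∀ b ∈ M, |(a : ℝ) - (b : ℝ)| ≤ δ → |f a - f b| ≤ ε

/-- A real number x is close to M ⊆ ℚ: x lies in the closure of M in ℝ. -/
def CloseTo (M : Set ℚ) (x : ℝ) : Prop :=
  ∀ ε : ℝ, 0 < ε → ∃ a ∈ M, |x - (a : ℝ)| ≤ ε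

/-- y is the extended value of f at x: every sequence in M converging to x has
f-images converging to y. -/
def ExtVal (M : Set ℚ) (f : ℚ → ℝ) (x y : ℝ) : Prop :=
  ∀ a : ℕ → ℚ, (∀ n, a n ∈ M) →
    Tendsto (fun n => ((a n : ℝ))) atTop (𝓝 x) →
    Tendsto (fun n => f (a n)) atTop (𝓝 y)

/-! Uniform continuity bounds `f` on the totally bounded set `M`, so `inf f(M)` and `sup f(M)` lie
in the closure of `f(M)`. Every `s` in that closure is a limit `f(aₙ) → s` with `aₙ ∈ M`; by
Bolzano–Weierstrass a subsequence of `aₙ` converges to some real `x`, and `s` is the extended value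
at `x` because any other sequence in `M` converging to `x` is uniformly close to it. -/

open Uniformity

theorem UC.uniformContinuousOn {M : Set ℚ} {f : ℚ → ℝ} (hf : UC M f) :
    UniformContinuousOn f M :=
  Metric.uniformContinuousOn_iff_le.2 fun ε hε => by
    simpa only [Rat.dist_eq, Real.dist_eq] using hf ε hε

theorem tendsto_uniformity_of_tendsto_coe {ι : Type*} {l : Filter ι} {u v : ι → ℚ} {x : ℝ}
    (hu : Tendsto (fun i => (u i : ℝ)) l (𝓝 x)) (hv : Tendsto (fun i => (v i : ℝ)) l (𝓝 x)) :
    Tendsto (fun i => (u i, v i)) l (𝓤 ℚ) := by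
  rw [← Rat.isUniformEmbedding_coe_real.isUniformInducing.comap_uniformity, tendsto_comap_iff]
  exact (hu.prodMk_nhds hv).mono_right (nhds_le_uniformity x)

theorem UC.extVal_of_tendsto {M : Set ℚ} {f : ℚ → ℝ} (hf : UC M f) {a : ℕ → ℚ}
    (ha : ∀ n, a n ∈ M) {x L : ℝ} (hx : Tendsto (fun n => (a n : ℝ)) atTop (𝓝 x))
    (hL : Tendsto (fun n => f (a n)) atTop (𝓝 L)) : ExtVal M f x L := by
  intro b hb hbx
  have hab : Tendsto (fun n => (a n, b n)) atTop (𝓤 ℚ) :=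
    tendsto_uniformity_of_tendsto_coe hx hbx
  refine hL.congr_uniformity (Tendsto.comp hf.uniformContinuousOn (tendsto_inf.2 ⟨hab, ?_⟩))
  exact tendsto_principal.2 (Eventually.of_forall fun n => ⟨ha n, hb n⟩)

theorem closeTo_of_tendsto {M : Set ℚ} {a : ℕ → ℚ} (ha : ∀ n, a n ∈ M) {x : ℝ}
    (hx : Tendsto (fun n => (a n : ℝ)) atTop (𝓝 x)) : CloseTo M x := fun _ hε =>
  let ⟨n, hn⟩ := (hx.eventually (Metric.closedBall_mem_nhds x hε)).exists
  ⟨a n, ha n, Metric.mem_closedBall'.1 hn⟩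

theorem UC.isBounded_image {M : Set ℚ} {f : ℚ → ℝ} (hf : UC M f)
    (hbd : ∃ C : ℝ, ∀ a ∈ M, |(a : ℝ)| ≤ C) : Bornology.IsBounded (f '' M) := by
  obtain ⟨C, hC⟩ := hbd
  have hM : TotallyBounded M :=
    (totallyBounded_preimage Rat.isUniformEmbedding_coe_real.isUniformInducing
      (totallyBounded_Icc (-C) C)).subset fun a ha => abs_le.1 (hC a ha)
  have hMuniv : TotallyBounded (Set.univ : Set M) := by
    rwa [← totallyBounded_image_iff (isUniformInducing_val M), Set.image_univ, Subtype.range_coe]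
  simpa only [Set.image_univ, Set.range_domRestrict] using
    (hMuniv.image hf.uniformContinuousOn.restrict).isBounded

theorem UC.exists_extVal_of_mem_closure {M : Set ℚ} {f : ℚ → ℝ} (hf : UC M f)
    (hbd : ∃ C : ℝ, ∀ a ∈ M, |(a : ℝ)| ≤ C) {s : ℝ} (hs : s ∈ closure (f '' M)) :
    ∃ x, CloseTo M x ∧ ExtVal M f x s := by
  obtain ⟨t, ht, hts⟩ := mem_closure_iff_seq_limit.1 hs
  choose a ha hfa using ht
  obtain ⟨C, hC⟩ := hbd
  have ha_mem : ∀ n, (a n : ℝ) ∈ Metric.closedBall 0 C := fun n => by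
    rw [mem_closedBall_zero_iff, Real.norm_eq_abs]
    exact hC _ (ha n)
  obtain ⟨x, -, φ, hφ, hx⟩ := tendsto_subseq_of_bounded Metric.isBounded_closedBall ha_mem
  have hfs : Tendsto (fun k => f (a (φ k))) atTop (𝓝 s) := by
    simpa only [Function.comp_def, hfa] using hts.comp hφ.tendsto_atTop
  exact ⟨x, closeTo_of_tendsto (fun k => ha (φ k)) hx,
    hf.extVal_of_tendsto (fun k => ha (φ k)) hx hfs⟩

/-- Attaining extremes: a UC function on a nonempty bounded M ⊆ ℚ attains (via
extended values at points close to M) a global minimum and a global maximum. -/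
theorem attaining_extremes (M : Set ℚ) (hM : M.Nonempty)
    (hbd : ∃ C : ℝ, ∀ a ∈ M, |(a : ℝ)| ≤ C)
    (f : ℚ → ℝ) (hf : UC M f) :
    ∃ y y' : ℝ, CloseTo M y ∧ CloseTo M y' ∧
      ∃ fy fy' : ℝ, ExtVal M f y fy ∧ ExtVal M f y' fy' ∧
        ∀ a ∈ M, fy ≤ f a ∧ f a ≤ fy' := by
  have hbdd := hf.isBounded_image hbd
  have hne := hM.image f
  obtain ⟨y, hy, hfy⟩ := hf.exists_extVal_of_mem_closure hbd (csInf_mem_closure hne hbdd.bddBelow)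
  obtain ⟨y', hy', hfy'⟩ := hf.exists_extVal_of_mem_closure hbd (csSup_mem_closure hne hbdd.bddAbove)
  exact ⟨y, y', hy, hy', _, _, hfy, hfy', fun a ha =>
    ⟨csInf_le hbdd.bddBelow ⟨a, ha, rfl⟩, le_csSup hbdd.bddAbove ⟨a, ha, rfl⟩⟩⟩
end

section
/- Let u < v be real numbers and let f : [u,v]_ℚ → ℝ be uniformly continuous with f(u)·f(v) ≤ 0, where f(u) and f(v) denote extended values. Then there exists a real number z with u ≤ z ≤ v and f(z) = 0, where f(z) denotes the extended value. -/
open Filter Topology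

/-- The rational interval [u,v]_ℚ = {a ∈ ℚ : u ≤ a ≤ v}. -/
def RatIcc (u v : ℝ) : Set ℚ := {a : ℚ | u ≤ (a : ℝ) ∧ (a : ℝ) ≤ v}

lemma ratIcc_exists_near (u v x : ℝ) (huv : u < v) (hx : x ∈ Set.Icc u v)
    (ε : ℝ) (hε : 0 < ε) : ∃ q : ℚ, q ∈ RatIcc u v ∧ |(q:ℝ) - x| ≤ ε := by
  have hlo : max u (x - ε) < min v (x + ε) := by
    rcases eq_or_lt_of_le hx.1 with h | h
    · subst h
      simp only [max_lt_iff, lt_min_iff]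
      constructor <;> constructor <;> linarith
    · simp only [max_lt_iff, lt_min_iff]
      have h2 := hx.2
      refine ⟨⟨?_, ?_⟩, ?_, ?_⟩ <;> linarith
  obtain ⟨q, hq1, hq2⟩ := exists_rat_btwn hlo
  refine ⟨q, ⟨?_, ?_⟩, ?_⟩
  · exact le_of_lt (lt_of_le_of_lt (le_max_left _ _) hq1)
  · exact le_of_lt (lt_of_lt_of_le hq2 (min_le_left _ _))
  · rw [abs_le]
    constructor
    · have := lt_of_le_of_lt (le_max_right _ _) hq1; linarith
    · have := lt_of_lt_of_le hq2 (min_le_right _ _); linarith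

/-- HMC Bolzano–Cauchy theorem: a UC function on [u,v]_ℚ whose extended values at u
and v have product ≤ 0 has extended value 0 at some point z with u ≤ z ≤ v. -/
theorem bolzano_cauchy (u v : ℝ) (huv : u < v) (f : ℚ → ℝ)
    (hf : UC (RatIcc u v) f)
    (fu fv : ℝ) (hfu : ExtVal (RatIcc u v) f u fu) (hfv : ExtVal (RatIcc u v) f v fv)
    (hsign : fu * fv ≤ 0) :
    ∃ z : ℝ, u ≤ z ∧ z ≤ v ∧ ExtVal (RatIcc u v) f z 0 := by
  classical
  have hM : ∃ q : ℚ, q ∈ RatIcc u v := by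
    obtain ⟨q, hq, _⟩ := ratIcc_exists_near u v u huv ⟨le_refl u, le_of_lt huv⟩ 1 one_pos
    exact ⟨q, hq⟩
  have H : ∀ x : ℝ, ∀ n : ℕ, ∃ q : ℚ, q ∈ RatIcc u v ∧
      (x ∈ Set.Icc u v → |(q:ℝ) - x| ≤ 1/((n:ℝ)+1)) := by
    intro x n
    by_cases hx : x ∈ Set.Icc u v
    · obtain ⟨q, hq, hq2⟩ := ratIcc_exists_near u v x huv hx (1/((n:ℝ)+1)) (by positivity)
      exact ⟨q, hq, fun _ => hq2⟩
    · exact ⟨hM.choose, hM.choose_spec, fun h => absurd h hx⟩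
  choose s hsM hsc using H
  have hone : Tendsto (fun n : ℕ => 1/((n:ℝ)+1)) atTop (𝓝 0) :=
    tendsto_one_div_add_atTop_nhds_zero_nat
  have hstend : ∀ x ∈ Set.Icc u v, Tendsto (fun n => ((s x n : ℝ))) atTop (𝓝 x) := by
    intro x hx
    have h0 : Tendsto (fun n => ((s x n : ℝ)) - x) atTop (𝓝 0) :=
      squeeze_zero_norm (fun n => by rw [Real.norm_eq_abs]; exact hsc x n hx) hone
    simpa using h0.add_const x
  have hCauchy : ∀ x ∈ Set.Icc u v, ∃ y, Tendsto (fun n => f (s x n)) atTop (𝓝 y) := by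
    intro x hx
    apply cauchySeq_tendsto_of_complete
    rw [Metric.cauchySeq_iff]
    intro ε hε
    obtain ⟨δ, hδ, hδ'⟩ := hf (ε/2) (by linarith)
    have hev : ∀ᶠ m : ℕ in atTop, 1/((m:ℝ)+1) < δ/2 :=
      hone.eventually (gt_mem_nhds (by linarith))
    rw [eventually_atTop] at hev
    obtain ⟨N, hN⟩ := hev
    refine ⟨N, fun m hm n hn => ?_⟩
    rw [Real.dist_eq]
    have h1 := hsc x m hx
    have h2 := hsc x n hx
    have h1' := hN m hm
    have h2' := hN n hn
    have hab : |(s x m : ℝ) - (s x n : ℝ)| ≤ δ := by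
      have := abs_sub_le ((s x m : ℝ)) x ((s x n : ℝ))
      have h2'' : |x - (s x n : ℝ)| = |(s x n : ℝ) - x| := abs_sub_comm _ _
      linarith
    have := hδ' _ (hsM x m) _ (hsM x n) hab
    linarith
  have hg' : ∀ x : ℝ, ∃ y, x ∈ Set.Icc u v →
      Tendsto (fun n => f (s x n)) atTop (𝓝 y) := by
    intro x
    by_cases hx : x ∈ Set.Icc u v
    · obtain ⟨y, hy⟩ := hCauchy x hx; exact ⟨y, fun _ => hy⟩
    · exact ⟨0, fun h => absurd h hx⟩
  choose g hg using hg'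
  have hext : ∀ x ∈ Set.Icc u v, ∀ a : ℕ → ℚ, (∀ n, a n ∈ RatIcc u v) →
      Tendsto (fun n => ((a n:ℝ))) atTop (𝓝 x) →
      Tendsto (fun n => f (a n)) atTop (𝓝 (g x)) := by
    intro x hx a haM halim
    rw [Metric.tendsto_atTop]
    intro ε hε
    obtain ⟨δ, hδ, hδ'⟩ := hf (ε/2) (by linarith)
    have h1 : ∀ᶠ n : ℕ in atTop, |(a n:ℝ) - x| < δ/2 := by
      have := halim.eventually (Metric.ball_mem_nhds x (show (0:ℝ) < δ/2 by linarith))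
      filter_upwards [this] with n hn
      rwa [Real.dist_eq] at hn
    rw [eventually_atTop] at h1
    obtain ⟨N, hN⟩ := h1
    refine ⟨N, fun n hn => ?_⟩
    have key : |f (a n) - g x| ≤ ε/2 := by
      have hfs : Tendsto (fun m => f (s x m)) atTop (𝓝 (g x)) := hg x hx
      have hlim : Tendsto (fun m => |f (a n) - f (s x m)|) atTop (𝓝 (|f (a n) - g x|)) :=
        (tendsto_const_nhds.sub hfs).abs
      refine le_of_tendsto hlim ?_
      have hev : ∀ᶠ m : ℕ in atTop, 1/((m:ℝ)+1) < δ/2 :=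
        hone.eventually (gt_mem_nhds (by linarith))
      filter_upwards [hev] with m hm
      apply hδ' _ (haM n) _ (hsM x m)
      have h2 := hsc x m hx
      have h3 := hN n hn
      have := abs_sub_le ((a n : ℝ)) x ((s x m : ℝ))
      have h4 : |x - (s x m : ℝ)| = |(s x m : ℝ) - x| := abs_sub_comm _ _
      linarith
    rw [Real.dist_eq]
    linarith
  have hu : u ∈ Set.Icc u v := ⟨le_refl u, le_of_lt huv⟩
  have hv : v ∈ Set.Icc u v := ⟨le_of_lt huv, le_refl v⟩
  have hgu : g u = fu :=
    tendsto_nhds_unique (hg u hu) (hfu (s u) (fun n => hsM u n) (hstend u hu))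
  have hgv : g v = fv :=
    tendsto_nhds_unique (hg v hv) (hfv (s v) (fun n => hsM v n) (hstend v hv))
  have hguc : ∀ ε : ℝ, 0 < ε → ∃ δ : ℝ, 0 < δ ∧ ∀ x ∈ Set.Icc u v, ∀ y ∈ Set.Icc u v,
      |x - y| ≤ δ → |g x - g y| ≤ ε := by
    intro ε hε
    obtain ⟨δ, hδ, hδ'⟩ := hf ε hε
    refine ⟨δ/2, by linarith, ?_⟩
    intro x hx y hy hxy
    have hlim : Tendsto (fun m => |f (s x m) - f (s y m)|) atTop (𝓝 (|g x - g y|)) :=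
      ((hg x hx).sub (hg y hy)).abs
    refine le_of_tendsto hlim ?_
    have hev : ∀ᶠ m : ℕ in atTop, 1/((m:ℝ)+1) < δ/4 :=
      hone.eventually (gt_mem_nhds (by linarith))
    filter_upwards [hev] with m hm
    apply hδ' _ (hsM x m) _ (hsM y m)
    have h1 := hsc x m hx
    have h2 := hsc y m hy
    have t1 := abs_sub_le ((s x m : ℝ)) x ((s y m : ℝ))
    have t2 := abs_sub_le x y ((s y m : ℝ))
    have h4 : |y - (s y m : ℝ)| = |(s y m : ℝ) - y| := abs_sub_comm _ _
    linarith
  have hcont : ContinuousOn g (Set.Icc u v) := by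
    rw [Metric.continuousOn_iff]
    intro x hx ε hε
    obtain ⟨δ, hδ, h⟩ := hguc (ε/2) (by linarith)
    refine ⟨δ, hδ, fun y hy hyx => ?_⟩
    have : |g y - g x| ≤ ε/2 := by
      apply h y hy x hx
      rw [Real.dist_eq] at hyx
      exact le_of_lt hyx
    rw [Real.dist_eq]
    linarith
  have hzex : ∃ z ∈ Set.Icc u v, g z = 0 := by
    rcases mul_nonpos_iff.mp hsign with ⟨h1, h2⟩ | ⟨h1, h2⟩
    · have : (0:ℝ) ∈ Set.Icc (g v) (g u) := by rw [hgu, hgv]; exact ⟨h2, h1⟩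
      obtain ⟨z, hz, hz0⟩ := intermediate_value_Icc' (le_of_lt huv) hcont this
      exact ⟨z, hz, hz0⟩
    · have : (0:ℝ) ∈ Set.Icc (g u) (g v) := by rw [hgu, hgv]; exact ⟨h1, h2⟩
      obtain ⟨z, hz, hz0⟩ := intermediate_value_Icc (le_of_lt huv) hcont this
      exact ⟨z, hz, hz0⟩
  obtain ⟨z, hz, hz0⟩ := hzex
  refine ⟨z, hz.1, hz.2, ?_⟩
  intro a haM halim
  have := hext z hz a haM halim
  rwa [hz0] at this
end

section
/- Let M ⊆ ℚ and let f : M → ℝ be a function whose derivative f' : D(f) → ℝ is uniform and bounded (i.e. there is a real C with |f'(a)| ≤ C for all a ∈ D(f)). Then the restriction of f to D(f) is uniformly continuous. -/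
open Filter Topology

/-- a ∈ ℚ is a limit point of M ⊆ ℚ (in ℝ). -/
def LimitPt (M : Set ℚ) (a : ℚ) : Prop :=
  ∀ ε : ℝ, 0 < ε → ∃ b ∈ M, 0 < |(a : ℝ) - (b : ℝ)| ∧ |(a : ℝ) - (b : ℝ)| ≤ ε

/-- The derivative of f at a ∈ M equals y. -/
def HasDerivAtPt (M : Set ℚ) (f : ℚ → ℝ) (a : ℚ) (y : ℝ) : Prop :=
  ∀ ε : ℝ, 0 < ε → ∃ δ : ℝ, 0 < δ ∧
    ∀ b ∈ M, 0 < |(b : ℝ) - (a : ℝ)| → |(b : ℝ) - (a : ℝ)| ≤ δ →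
      |(f b - f a) / ((b : ℝ) - (a : ℝ)) - y| ≤ ε

/-- D(f): the set of limit points of M at which the derivative of f exists. -/
def Dset (M : Set ℚ) (f : ℚ → ℝ) : Set ℚ :=
  {a : ℚ | a ∈ M ∧ LimitPt M a ∧ ∃ y : ℝ, HasDerivAtPt M f a y}

/-- The derivative function f' is uniform on D: the difference quotients converge
to f' uniformly in the base point a ∈ D. -/
def UniformDeriv (M : Set ℚ) (f : ℚ → ℝ) (D : Set ℚ) (f' : ℚ → ℝ) : Prop :=
  ∀ ε : ℝ, 0 < ε → ∃ δ : ℝ, 0 < δ ∧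
    ∀ a ∈ D, ∀ b ∈ M, 0 < |(b : ℝ) - (a : ℝ)| → |(b : ℝ) - (a : ℝ)| ≤ δ →
      |(f b - f a) / ((b : ℝ) - (a : ℝ)) - f' a| ≤ ε

/-- If the derivative f' of f : M → ℝ is uniform on D(f) and bounded there, then
the restriction of f to D(f) is uniformly continuous. -/
theorem uniform_bounded_deriv_implies_UC (M : Set ℚ) (f f' : ℚ → ℝ)
    (hd : ∀ a ∈ Dset M f, HasDerivAtPt M f a (f' a))
    (hunif : UniformDeriv M f (Dset M f) f')
    (C : ℝ) (hC : ∀ a ∈ Dset M f, |f' a| ≤ C) :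
    UC (Dset M f) f := by
  intro ε hε
  obtain ⟨δ, hδ, H⟩ := hunif 1 one_pos
  have hCpos : (0:ℝ) < |C| + 1 := by positivity
  refine ⟨min δ (ε / (|C| + 1)), lt_min hδ (by positivity), ?_⟩
  intro a ha b hb hab
  rcases eq_or_ne a b with rfl | hne
  · simp [hε.le]
  · have hba : (0:ℝ) < |(b : ℝ) - (a : ℝ)| := by
      rw [abs_pos, sub_ne_zero]
      intro h
      exact hne (by exact_mod_cast h.symm)
    have hab' : |(b : ℝ) - (a : ℝ)| ≤ δ := by
      rw [abs_sub_comm] at hab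
      exact hab.trans (min_le_left _ _)
    have hq := H a ha b hb.1 hba hab'
    have hfa : |f' a| ≤ |C| := (hC a ha).trans (le_abs_self C)
    have key : |f b - f a| ≤ (|C| + 1) * |(b : ℝ) - (a : ℝ)| := by
      have h1 : |(f b - f a) / ((b : ℝ) - (a : ℝ))| ≤ |C| + 1 := by
        calc |(f b - f a) / ((b : ℝ) - (a : ℝ))|
            ≤ |(f b - f a) / ((b : ℝ) - (a : ℝ)) - f' a| + |f' a| := by
              have := abs_sub_abs_le_abs_sub ((f b - f a) / ((b : ℝ) - (a : ℝ))) (f' a)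
              linarith [abs_nonneg (f' a)]
          _ ≤ 1 + |C| := add_le_add hq hfa
          _ = |C| + 1 := by ring
      have h2 : |f b - f a| = |(f b - f a) / ((b : ℝ) - (a : ℝ))| * |(b : ℝ) - (a : ℝ)| := by
        rw [abs_div, div_mul_cancel₀]
        exact ne_of_gt hba
      rw [h2]
      exact mul_le_mul_of_nonneg_right h1 hba.le
    have hab2 : |(b : ℝ) - (a : ℝ)| ≤ ε / (|C| + 1) := by
      rw [abs_sub_comm] at hab
      exact hab.trans (min_le_right _ _)
    rw [abs_sub_comm]
    calc |f b - f a| ≤ (|C| + 1) * (ε / (|C| + 1)) :=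
          key.trans (mul_le_mul_of_nonneg_left hab2 hCpos.le)
      _ = ε := by field_simp
end

section
/- Let M ⊆ ℚ and let f, g : M → ℝ be functions such that (i) f and g are bounded, (ii) one of them is uniformly continuous and the other has bounded derivative, and (iii) the derivatives f' and g' are uniform on D(f) and D(g) respectively. Then D(f) ∩ D(g) ⊆ D(fg), on D(f) ∩ D(g) the derivative of the pointwise product fg equals f'g + fg', and this derivative is uniform on D(f) ∩ D(g). -/
open Filter Topology

lemma hmc_key (M : Set ℚ) (f g f' g' : ℚ → ℝ)
    (hfb : ∃ C : ℝ, ∀ a ∈ M, |f a| ≤ C)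
    (hgb : ∃ C : ℝ, ∀ a ∈ M, |g a| ≤ C)
    (hUCf : UC M f)
    (hg'b : ∃ C : ℝ, ∀ a ∈ Dset M g, |g' a| ≤ C)
    (hff : UniformDeriv M f (Dset M f) f')
    (hgg : UniformDeriv M g (Dset M g) g') :
    UniformDeriv M (fun b => f b * g b) (Dset M f ∩ Dset M g)
      (fun a => f' a * g a + f a * g' a) := by
  obtain ⟨Cf, hCf⟩ := hfb
  obtain ⟨Cg, hCg⟩ := hgb
  obtain ⟨Cd, hCd⟩ := hg'b
  intro ε hε
  set K : ℝ := max Cf 0 + max Cg 0 + max Cd 0 + 1 with hK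
  have hK0 : 0 < K := by positivity
  have hεs : 0 < ε / (3 * K) := by positivity
  obtain ⟨δf, hδf0, hδf⟩ := hff _ hεs
  obtain ⟨δg, hδg0, hδg⟩ := hgg _ hεs
  obtain ⟨δu, hδu0, hδu⟩ := hUCf _ hεs
  refine ⟨min δf (min δg δu), by positivity, ?_⟩
  intro a ha b hb hΔ0 hΔ
  have hΔne : (b : ℝ) - (a : ℝ) ≠ 0 := by
    intro h; rw [h] at hΔ0; simp at hΔ0
  have h1 := hδf a ha.1 b hb hΔ0 (le_trans hΔ (min_le_left _ _))
  have h2 := hδg a ha.2 b hb hΔ0 (le_trans hΔ ((min_le_right _ _).trans (min_le_left _ _)))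
  have h3 := hδu b hb a ha.1.1 (le_trans hΔ ((min_le_right _ _).trans (min_le_right _ _)))
  have e1 : |f b| ≤ K := by
    have := hCf b hb
    have : |f b| ≤ max Cf 0 := le_trans this (le_max_left _ _)
    nlinarith [le_max_right Cg (0:ℝ), le_max_right Cd (0:ℝ)]
  have e2 : |g a| ≤ K := by
    have := hCg a ha.1.1
    have : |g a| ≤ max Cg 0 := le_trans this (le_max_left _ _)
    nlinarith [le_max_right Cf (0:ℝ), le_max_right Cd (0:ℝ)]
  have e3 : |g' a| ≤ K := by
    have := hCd a ha.2
    have : |g' a| ≤ max Cd 0 := le_trans this (le_max_left _ _)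
    nlinarith [le_max_right Cf (0:ℝ), le_max_right Cg (0:ℝ)]
  have hdec : (f b * g b - f a * g a) / ((b : ℝ) - (a : ℝ)) - (f' a * g a + f a * g' a)
      = f b * ((g b - g a) / ((b : ℝ) - (a : ℝ)) - g' a)
        + g a * ((f b - f a) / ((b : ℝ) - (a : ℝ)) - f' a)
        + (f b - f a) * g' a := by
    field_simp
    ring
  simp only
  rw [hdec]
  have hb1 : |f b * ((g b - g a) / ((b : ℝ) - (a : ℝ)) - g' a)| ≤ K * (ε / (3 * K)) := by
    rw [abs_mul]
    exact mul_le_mul e1 h2 (abs_nonneg _) hK0.le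
  have hb2 : |g a * ((f b - f a) / ((b : ℝ) - (a : ℝ)) - f' a)| ≤ K * (ε / (3 * K)) := by
    rw [abs_mul]
    exact mul_le_mul e2 h1 (abs_nonneg _) hK0.le
  have hb3 : |(f b - f a) * g' a| ≤ (ε / (3 * K)) * K := by
    rw [abs_mul]
    exact mul_le_mul h3 e3 (abs_nonneg _) hεs.le
  have htotal : K * (ε / (3 * K)) + K * (ε / (3 * K)) + (ε / (3 * K)) * K = ε := by
    field_simp
    ring
  calc |f b * ((g b - g a) / ((b : ℝ) - (a : ℝ)) - g' a)
        + g a * ((f b - f a) / ((b : ℝ) - (a : ℝ)) - f' a)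
        + (f b - f a) * g' a|
      ≤ |f b * ((g b - g a) / ((b : ℝ) - (a : ℝ)) - g' a)
        + g a * ((f b - f a) / ((b : ℝ) - (a : ℝ)) - f' a)|
        + |(f b - f a) * g' a| := abs_add_le _ _
    _ ≤ |f b * ((g b - g a) / ((b : ℝ) - (a : ℝ)) - g' a)|
        + |g a * ((f b - f a) / ((b : ℝ) - (a : ℝ)) - f' a)|
        + |(f b - f a) * g' a| := by gcongr; exact abs_add_le _ _
    _ ≤ K * (ε / (3 * K)) + K * (ε / (3 * K)) + (ε / (3 * K)) * K := by
        exact add_le_add (add_le_add hb1 hb2) hb3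
    _ = ε := htotal

/-- HMC Leibniz formula: if f and g are bounded, one of them is UC and the other has
bounded derivative, and the derivatives f', g' are uniform on D(f), D(g), then
D(f) ∩ D(g) ⊆ D(fg), on D(f) ∩ D(g) the derivative of fg is f'g + fg', and this
derivative is uniform on D(f) ∩ D(g). -/
theorem hmc_leibniz (M : Set ℚ) (f g f' g' : ℚ → ℝ)
    (hfb : ∃ C : ℝ, ∀ a ∈ M, |f a| ≤ C)
    (hgb : ∃ C : ℝ, ∀ a ∈ M, |g a| ≤ C)
    (hone : (UC M f ∧ ∃ C : ℝ, ∀ a ∈ Dset M g, |g' a| ≤ C) ∨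
            (UC M g ∧ ∃ C : ℝ, ∀ a ∈ Dset M f, |f' a| ≤ C))
    (hdf : ∀ a ∈ Dset M f, HasDerivAtPt M f a (f' a))
    (hdg : ∀ a ∈ Dset M g, HasDerivAtPt M g a (g' a))
    (hff : UniformDeriv M f (Dset M f) f')
    (hgg : UniformDeriv M g (Dset M g) g') :
    Dset M f ∩ Dset M g ⊆ Dset M (fun a => f a * g a) ∧
    (∀ a ∈ Dset M f ∩ Dset M g,
      HasDerivAtPt M (fun b => f b * g b) a (f' a * g a + f a * g' a)) ∧
    UniformDeriv M (fun b => f b * g b) (Dset M f ∩ Dset M g)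
      (fun a => f' a * g a + f a * g' a) := by
  have hU : UniformDeriv M (fun b => f b * g b) (Dset M f ∩ Dset M g)
      (fun a => f' a * g a + f a * g' a) := by
    rcases hone with ⟨hUCf, hg'b⟩ | ⟨hUCg, hf'b⟩
    · exact hmc_key M f g f' g' hfb hgb hUCf hg'b hff hgg
    · have hU' := hmc_key M g f g' f' hgb hfb hUCg hf'b hgg hff
      intro ε hε
      obtain ⟨δ, hδ0, hδ⟩ := hU' ε hε
      refine ⟨δ, hδ0, fun a ha b hb h1 h2 => ?_⟩
      have h := hδ a ⟨ha.2, ha.1⟩ b hb h1 h2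
      simp only at h ⊢
      rw [show f b * g b - f a * g a = g b * f b - g a * f a from by ring,
        show f' a * g a + f a * g' a = g' a * f a + g a * f' a from by ring]
      exact h
  have hpt : ∀ a ∈ Dset M f ∩ Dset M g,
      HasDerivAtPt M (fun b => f b * g b) a (f' a * g a + f a * g' a) := by
    intro a ha ε hε
    obtain ⟨δ, hδ0, hδ⟩ := hU ε hε
    exact ⟨δ, hδ0, fun b hb => hδ a ha b hb⟩
  exact ⟨fun a ha => ⟨ha.1.1, ha.1.2.1, _, hpt a ha⟩, hpt, hU⟩
end

section
/- Let u < x < v be real numbers and let f : [u,v]_ℚ → ℝ be a function whose derivative f' is defined at every point of [u,v]_ℚ, is uniform on [u,v]_ℚ, and is uniformly continuous, and suppose the extended value f'(x) ≠ 0. Then f(x) (extended value) is not a global extreme of f: there exist b', b'' ∈ [u,v]_ℚ with f(b') < f(x) < f(b''). -/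
open Filter Topology

/-! The uniform derivative gives a first-order expansion
`|f b - f a - f' a * (b - a)| ≤ ε * |b - a|` valid for all base points `a` at once, so it
survives passing to the limit along rationals `a → x`. At the extended point `x` we thus get
`|f b - f(x) - f'(x) * (b - x)| ≤ |f'(x)| / 2 * |b - x|` for `b` near `x`, and then
`f b - f(x)` has the sign of `f'(x) * (b - x)`, which changes sign as `b` crosses `x`. -/

lemma exists_rat_mem_ratIcc_btwn {u v c d : ℝ} (huc : u ≤ c) (hcd : c < d) (hdv : d ≤ v) :
    ∃ q ∈ RatIcc u v, c < q ∧ (q : ℝ) < d := by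
  obtain ⟨q, hcq, hqd⟩ := exists_rat_btwn hcd
  exact ⟨q, ⟨huc.trans hcq.le, hqd.le.trans hdv⟩, hcq, hqd⟩

lemma exists_seq_mem_ratIcc_tendsto {u v x : ℝ} (hux : u < x) (hxv : x < v) :
    ∃ a : ℕ → ℚ, (∀ n, a n ∈ RatIcc u v) ∧ Tendsto (fun n => (a n : ℝ)) atTop (𝓝 x) := by
  have hx : x ∈ closure (((↑) : ℚ → ℝ) '' RatIcc u v) := by
    refine closure_mono ?_ (Rat.denseRange_cast.open_subset_closure_inter isOpen_Ioo ⟨hux, hxv⟩)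
    rintro _ ⟨⟨hu, hv⟩, q, rfl⟩
    exact ⟨q, ⟨hu.le, hv.le⟩, rfl⟩
  obtain ⟨y, hyM, hyx⟩ := mem_closure_iff_seq_limit.mp hx
  choose a haM hay using hyM
  exact ⟨a, haM, by simpa only [hay] using hyx⟩

lemma UniformDeriv.abs_sub_sub_mul_le {M D : Set ℚ} {f f' : ℚ → ℝ} (h : UniformDeriv M f D f')
    {ε : ℝ} (hε : 0 < ε) :
    ∃ δ > 0, ∀ a ∈ D, ∀ b ∈ M, |(b : ℝ) - a| ≤ δ →
      |f b - f a - f' a * (b - a)| ≤ ε * |(b : ℝ) - a| := by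
  obtain ⟨δ, hδ, hquot⟩ := h ε hε
  refine ⟨δ, hδ, fun a ha b hb hba => ?_⟩
  rcases (abs_nonneg ((b : ℝ) - a)).eq_or_lt with hzero | hpos
  · obtain rfl : b = a := Rat.cast_injective (sub_eq_zero.mp (abs_eq_zero.mp hzero.symm))
    simp
  · have hne : (b : ℝ) - a ≠ 0 := abs_pos.mp hpos
    calc |f b - f a - f' a * (b - a)|
        = |(f b - f a) / ((b : ℝ) - a) - f' a| * |(b : ℝ) - a| := by
          rw [← abs_mul, sub_mul, div_mul_cancel₀ _ hne, mul_comm]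
      _ ≤ ε * |(b : ℝ) - a| := by gcongr; exact hquot a ha b hb hpos hba

lemma abs_sub_sub_mul_le_of_tendsto {M : Set ℚ} {f f' : ℚ → ℝ} {x fx f'x ε δ : ℝ}
    (happrox : ∀ a ∈ M, ∀ b ∈ M, |(b : ℝ) - a| ≤ δ →
      |f b - f a - f' a * (b - a)| ≤ ε * |(b : ℝ) - a|)
    {a : ℕ → ℚ} (haM : ∀ n, a n ∈ M) (hax : Tendsto (fun n => (a n : ℝ)) atTop (𝓝 x))
    (hfx : ExtVal M f x fx) (hf'x : ExtVal M f' x f'x) {b : ℚ} (hb : b ∈ M)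
    (hbx : |(b : ℝ) - x| < δ) :
    |f b - fx - f'x * (b - x)| ≤ ε * |(b : ℝ) - x| := by
  have hdist : Tendsto (fun n => |(b : ℝ) - a n|) atTop (𝓝 |(b : ℝ) - x|) :=
    (tendsto_const_nhds.sub hax).abs
  refine le_of_tendsto_of_tendsto
    ((tendsto_const_nhds.sub (hfx a haM hax)).sub
      ((hf'x a haM hax).mul (tendsto_const_nhds.sub hax))).abs
    (hdist.const_mul ε) ?_
  filter_upwards [hdist.eventually (eventually_le_nhds hbx)] with n hn
  exact happrox (a n) (haM n) b hb hn

lemma mul_pos_of_abs_sub_le_half {r p : ℝ} (h : |r - p| ≤ |p| / 2) (hp : p ≠ 0) :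
    0 < r * p := by
  rcases hp.lt_or_gt with hneg | hpos
  · rw [abs_of_neg hneg] at h
    nlinarith [(abs_le.mp h).2]
  · rw [abs_of_pos hpos] at h
    nlinarith [(abs_le.mp h).1]

theorem extremes_and_uniform_derivatives_general (u v x : ℝ) (hux : u < x) (hxv : x < v)
    (f f' : ℚ → ℝ)
    (hunif : UniformDeriv (RatIcc u v) f (RatIcc u v) f')
    (fx f'x : ℝ)
    (hfx : ExtVal (RatIcc u v) f x fx)
    (hf'x : ExtVal (RatIcc u v) f' x f'x)
    (hne : f'x ≠ 0) :
    ∃ b' ∈ RatIcc u v, ∃ b'' ∈ RatIcc u v, f b' < fx ∧ fx < f b'' := by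
  obtain ⟨δ, hδ, happrox⟩ := hunif.abs_sub_sub_mul_le (half_pos (abs_pos.mpr hne))
  obtain ⟨a, haM, hax⟩ := exists_seq_mem_ratIcc_tendsto hux hxv
  have hsign : ∀ b ∈ RatIcc u v, |(b : ℝ) - x| < δ → (b : ℝ) ≠ x →
      0 < (f b - fx) * (f'x * (b - x)) := by
    intro b hb hbx hbne
    refine mul_pos_of_abs_sub_le_half ?_ (mul_ne_zero hne (sub_ne_zero.mpr hbne))
    calc _ ≤ |f'x| / 2 * |(b : ℝ) - x| :=
          abs_sub_sub_mul_le_of_tendsto happrox haM hax hfx hf'x hb hbx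
      _ = |f'x * (b - x)| / 2 := by rw [abs_mul]; ring
  obtain ⟨b₁, hb₁, hb₁l, hb₁r⟩ :=
    exists_rat_mem_ratIcc_btwn (le_max_left u (x - δ)) (max_lt hux (by linarith)) hxv.le
  obtain ⟨b₂, hb₂, hb₂l, hb₂r⟩ :=
    exists_rat_mem_ratIcc_btwn hux.le (lt_min hxv (by linarith)) (min_le_left v (x + δ))
  have h₁ := hsign b₁ hb₁ (by
    rw [abs_lt]; constructor <;> linarith [le_max_right u (x - δ)]) hb₁r.ne
  have h₂ := hsign b₂ hb₂ (by
    rw [abs_lt]; constructor <;> linarith [min_le_right v (x + δ)]) hb₂l.ne'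
  rcases hne.lt_or_gt with hneg | hpos
  · exact ⟨b₂, hb₂, b₁, hb₁,
      sub_neg.mp (neg_of_mul_pos_left h₂ (mul_neg_of_neg_of_pos hneg (sub_pos.mpr hb₂l)).le),
      sub_pos.mp (pos_of_mul_pos_left h₁ (mul_pos_of_neg_of_neg hneg (sub_neg.mpr hb₁r)).le)⟩
  · exact ⟨b₁, hb₁, b₂, hb₂,
      sub_neg.mp (neg_of_mul_pos_left h₁ (mul_neg_of_pos_of_neg hpos (sub_neg.mpr hb₁r)).le),
      sub_pos.mp (pos_of_mul_pos_left h₂ (mul_pos hpos (sub_pos.mpr hb₂l)).le)⟩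

/-- Extremes and uniform derivatives: if f : [u,v]_ℚ → ℝ has a derivative f' defined
everywhere, uniform and UC on [u,v]_ℚ, and its extended value at x ∈ (u,v) is nonzero,
then the extended value f(x) is not a global extreme of f. -/
theorem extremes_and_uniform_derivatives (u v x : ℝ) (hux : u < x) (hxv : x < v)
    (f f' : ℚ → ℝ)
    (hderiv : ∀ a ∈ RatIcc u v, HasDerivAtPt (RatIcc u v) f a (f' a))
    (hunif : UniformDeriv (RatIcc u v) f (RatIcc u v) f')
    (hUC : UC (RatIcc u v) f')
    (fx f'x : ℝ)
    (hfx : ExtVal (RatIcc u v) f x fx)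
    (hf'x : ExtVal (RatIcc u v) f' x f'x)
    (hne : f'x ≠ 0) :
    ∃ b' ∈ RatIcc u v, ∃ b'' ∈ RatIcc u v, f b' < fx ∧ fx < f b'' :=
  extremes_and_uniform_derivatives_general u v x hux hxv f f' hunif fx f'x hfx hf'x hne
end

section
/- (HMC Lagrange's mean value theorem) Let u < v be real numbers and let f : [u,v]_ℚ → ℝ be a function whose derivative f' is defined at every point of [u,v]_ℚ, is uniform on [u,v]_ℚ, and is uniformly continuous. Then there exists a real number x with u < x < v such that (f(v) − f(u))/(v − u) = f'(x), where f(u), f(v) and f'(x) denote extended values. -/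
open Filter Topology

lemma ratIcc_mem_between {u v : ℝ} {a b c : ℚ} (ha : a ∈ RatIcc u v)
    (hb : b ∈ RatIcc u v) (hac : a ≤ c) (hcb : c ≤ b) : c ∈ RatIcc u v :=
  ⟨le_trans ha.1 (by exact_mod_cast hac), le_trans (by exact_mod_cast hcb) hb.2⟩

lemma exists_rat_near' {u v : ℝ} (huv : u < v) {x : ℝ} (hx : x ∈ Set.Icc u v)
    {ε : ℝ} (hε : 0 < ε) : ∃ q : ℚ, q ∈ RatIcc u v ∧ |(q : ℝ) - x| < ε := by
  have hl : max u (x - ε) < min v (x + ε) := by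
    rcases hx with ⟨h1, h2⟩
    apply max_lt <;> apply lt_min <;> linarith
  obtain ⟨q, hq1, hq2⟩ := exists_rat_btwn hl
  refine ⟨q, ⟨le_of_lt (lt_of_le_of_lt (le_max_left _ _) hq1),
    le_of_lt (lt_of_lt_of_le hq2 (min_le_left _ _))⟩, ?_⟩
  rw [abs_sub_lt_iff]
  constructor
  · have := lt_of_lt_of_le hq2 (min_le_right _ _); linarith
  · have := lt_of_le_of_lt (le_max_right _ _) hq1; linarith

/-- HMC Lagrange's mean value theorem: if f : [u,v]_ℚ → ℝ has a derivative f' defined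
everywhere, uniform and UC on [u,v]_ℚ, then there is x with u < x < v such that the
extended value of f' at x equals (f(v) − f(u))/(v − u) (extended values). -/
theorem hmc_lagrange (u v : ℝ) (huv : u < v) (f f' : ℚ → ℝ)
    (hderiv : ∀ a ∈ RatIcc u v, HasDerivAtPt (RatIcc u v) f a (f' a))
    (hunif : UniformDeriv (RatIcc u v) f (RatIcc u v) f')
    (hUC : UC (RatIcc u v) f')
    (fu fv : ℝ)
    (hfu : ExtVal (RatIcc u v) f u fu)
    (hfv : ExtVal (RatIcc u v) f v fv) :
    ∃ x : ℝ, u < x ∧ x < v ∧ ExtVal (RatIcc u v) f' x ((fv - fu) / (v - u)) := by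
  set M := RatIcc u v with hMdef
  -- canonical approximating sequences
  have hseq : ∀ x : ℝ, x ∈ Set.Icc u v → ∀ n : ℕ,
      ∃ q : ℚ, q ∈ M ∧ |(q : ℝ) - x| < 1 / (n + 1) := by
    intro x hx n
    exact exists_rat_near' huv hx (by positivity)
  choose! a haM hadist using hseq
  have hatend : ∀ x ∈ Set.Icc u v, Tendsto (fun n => ((a x n : ℝ))) atTop (𝓝 x) := by
    intro x hx
    rw [← tendsto_sub_nhds_zero_iff]
    apply squeeze_zero_norm (fun n => (hadist x hx n).le)
    exact tendsto_one_div_add_atTop_nhds_zero_nat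
  -- f' is bounded on M
  obtain ⟨δ₀, hδ₀, hUC1⟩ := hUC 1 one_pos
  obtain ⟨δ', hδ'pos, hδ'le⟩ : ∃ δ' : ℚ, 0 < δ' ∧ (δ' : ℝ) ≤ δ₀ := by
    obtain ⟨q, hq1, hq2⟩ := exists_rat_btwn hδ₀
    exact ⟨q, by exact_mod_cast hq1, hq2.le⟩
  have base : ∀ p ∈ M, ∀ q ∈ M, |p - q| ≤ δ' → |f' p - f' q| ≤ 1 := by
    intro p hp q hq h
    apply hUC1 p hp q hq
    have h' : |(p : ℝ) - (q : ℝ)| ≤ (δ' : ℝ) := by exact_mod_cast h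
    linarith
  have chain : ∀ n : ℕ, ∀ p ∈ M, ∀ q ∈ M, |p - q| ≤ ((n : ℚ) + 1) * δ' →
      |f' p - f' q| ≤ (n : ℝ) + 1 := by
    intro n
    induction n with
    | zero =>
      intro p hp q hq h
      simpa using base p hp q hq (by simpa using h)
    | succ n ih =>
      have key : ∀ p ∈ M, ∀ q ∈ M, q ≤ p → p - q ≤ ((n : ℚ) + 2) * δ' →
          |f' p - f' q| ≤ (n : ℝ) + 2 := by
        intro p hp q hq hqp h
        rcases le_or_gt (p - q) δ' with h1 | h1
        · have := base p hp q hq (by rwa [abs_of_nonneg (by linarith)])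
          linarith
        · set c : ℚ := q + δ' with hc
          have hcM : c ∈ M := ratIcc_mem_between hq hp (by linarith) (by linarith)
          have h2 : |p - c| ≤ ((n : ℚ) + 1) * δ' := by
            rw [abs_of_nonneg (by simp [hc]; linarith)]
            simp only [hc]
            linarith
          have h3 := ih p hp c hcM h2
          have h4 : |f' c - f' q| ≤ 1 := by
            apply base c hcM q hq
            have : c - q = δ' := by simp [hc]
            rw [this, abs_of_pos hδ'pos]
          calc |f' p - f' q| ≤ |f' p - f' c| + |f' c - f' q| := abs_sub_le _ _ _
            _ ≤ (n : ℝ) + 2 := by linarith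
      intro p hp q hq h
      have h' : |p - q| ≤ ((n : ℚ) + 2) * δ' := by push_cast at h ⊢; linarith
      have hgoal : ((n + 1 : ℕ) : ℝ) + 1 = (n : ℝ) + 2 := by push_cast; ring
      rw [hgoal]
      rcases le_total q p with hqp | hpq
      · exact key p hp q hq hqp (by rwa [abs_of_nonneg (sub_nonneg.mpr hqp)] at h')
      · rw [abs_sub_comm] at h' ⊢
        exact key q hq p hp hpq (by rwa [abs_of_nonneg (sub_nonneg.mpr hpq)] at h')
  obtain ⟨q0, hq0a, hq0b⟩ := exists_rat_btwn huv
  have hq0 : q0 ∈ M := ⟨hq0a.le, hq0b.le⟩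
  obtain ⟨N, hN⟩ := exists_nat_gt ((v - u) / (δ' : ℝ))
  have hδ'r : (0 : ℝ) < (δ' : ℝ) := by exact_mod_cast hδ'pos
  have hbound : ∀ p ∈ M, |f' p| ≤ |f' q0| + ((N : ℝ) + 1) := by
    intro p hp
    have h2 : |(p : ℝ) - (q0 : ℝ)| ≤ v - u := by
      rw [abs_sub_le_iff]
      constructor
      · linarith [hp.1, hp.2, hq0.1, hq0.2]
      · linarith [hp.1, hp.2, hq0.1, hq0.2]
    have h3 : v - u ≤ ((N : ℝ) + 1) * (δ' : ℝ) := by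
      have := (div_lt_iff₀ hδ'r).mp hN
      nlinarith
    have h4 : |p - q0| ≤ ((N : ℚ) + 1) * δ' := by
      have : |(p : ℝ) - (q0 : ℝ)| ≤ ((N : ℝ) + 1) * (δ' : ℝ) := le_trans h2 h3
      exact_mod_cast this
    have h5 := chain N p hp q0 hq0 h4
    have := abs_sub_abs_le_abs_sub (f' p) (f' q0)
    linarith
  set B : ℝ := |f' q0| + ((N : ℝ) + 1) with hBdef
  have hB0 : 0 ≤ B := by positivity
  -- f is uniformly continuous
  obtain ⟨δ₁, hδ₁, hud1⟩ := hunif 1 one_pos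
  have hlip : ∀ p ∈ M, ∀ q ∈ M, |(p : ℝ) - (q : ℝ)| ≤ δ₁ →
      |f p - f q| ≤ (B + 1) * |(p : ℝ) - (q : ℝ)| := by
    intro p hp q hq h
    rcases eq_or_ne p q with rfl | hne
    · simp
    · have hs : ((p : ℝ) - (q : ℝ)) ≠ 0 := by
        rw [sub_ne_zero]; exact_mod_cast hne
      have hpos : 0 < |(p : ℝ) - (q : ℝ)| := abs_pos.mpr hs
      have h1 := hud1 q hq p hp hpos h
      have h2 : |(f p - f q) / ((p : ℝ) - (q : ℝ))| ≤ |f' q| + 1 := by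
        calc |(f p - f q) / ((p : ℝ) - (q : ℝ))|
            ≤ |(f p - f q) / ((p : ℝ) - (q : ℝ)) - f' q| + |f' q| := by
              have := abs_sub_abs_le_abs_sub ((f p - f q) / ((p : ℝ) - (q : ℝ))) (f' q)
              linarith [abs_nonneg (f' q)]
          _ ≤ 1 + |f' q| := by linarith
          _ = |f' q| + 1 := by ring
      have h3 : |f p - f q| = |(f p - f q) / ((p : ℝ) - (q : ℝ))| * |(p : ℝ) - (q : ℝ)| := by
        rw [abs_div, div_mul_cancel₀]
        exact ne_of_gt hpos
      rw [h3]
      apply mul_le_mul_of_nonneg_right _ (abs_nonneg _)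
      have := hbound q hq
      simp only [hBdef]
      linarith
  have hfUC : UC M f := by
    intro ε hε
    have hB1 : (0 : ℝ) < B + 1 := by linarith
    refine ⟨min δ₁ (ε / (B + 1)), lt_min hδ₁ (by positivity), ?_⟩
    intro p hp q hq h
    have h1 := hlip p hp q hq (le_trans h (min_le_left _ _))
    have h2 : |(p : ℝ) - (q : ℝ)| ≤ ε / (B + 1) := le_trans h (min_le_right _ _)
    calc |f p - f q| ≤ (B + 1) * |(p : ℝ) - (q : ℝ)| := h1
      _ ≤ (B + 1) * (ε / (B + 1)) := by
          apply mul_le_mul_of_nonneg_left h2 (le_of_lt hB1)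
      _ = ε := by field_simp
  -- extension of UC functions to [u,v]
  have extend : ∀ g : ℚ → ℝ, UC M g →
      ∃ G : ℝ → ℝ, ∀ x ∈ Set.Icc u v, ExtVal M g x (G x) := by
    intro g hg
    have hc : ∀ x : ℝ, x ∈ Set.Icc u v →
        ∃ y, Tendsto (fun n => g (a x n)) atTop (𝓝 y) := by
      intro x hx
      apply cauchySeq_tendsto_of_complete
      rw [Metric.cauchySeq_iff]
      intro ε hε
      obtain ⟨δ, hδ, hgδ⟩ := hg (ε / 2) (by positivity)
      have hca : CauchySeq (fun n => ((a x n : ℝ))) := (hatend x hx).cauchySeq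
      rw [Metric.cauchySeq_iff] at hca
      obtain ⟨K, hK⟩ := hca δ hδ
      refine ⟨K, fun m hm n hn => ?_⟩
      have h1 := hK m hm n hn
      rw [Real.dist_eq] at h1 ⊢
      have := hgδ (a x m) (haM x hx m) (a x n) (haM x hx n) h1.le
      linarith
    choose! G hG using hc
    refine ⟨G, fun x hx b hbM hbx => ?_⟩
    have hGx := hG x hx
    have hdiff : Tendsto (fun n => g (b n) - g (a x n)) atTop (𝓝 0) := by
      rw [NormedAddCommGroup.tendsto_nhds_zero]
      intro ε hε
      obtain ⟨δ, hδ, hgδ⟩ := hg (ε / 2) (by positivity)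
      have hd : Tendsto (fun n => ((b n : ℝ) - (a x n : ℝ))) atTop (𝓝 0) := by
        simpa using hbx.sub (hatend x hx)
      have := (NormedAddCommGroup.tendsto_nhds_zero.mp hd) δ hδ
      filter_upwards [this] with n hn
      have := hgδ (b n) (hbM n) (a x n) (haM x hx n) (by simpa using hn.le)
      calc ‖g (b n) - g (a x n)‖ ≤ ε / 2 := by simpa [Real.norm_eq_abs] using this
        _ < ε := by linarith
    have : Tendsto (fun n => (g (b n) - g (a x n)) + g (a x n)) atTop (𝓝 (0 + G x)) :=
      hdiff.add hGx
    simpa using this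
  obtain ⟨F, hF⟩ := extend f hfUC
  obtain ⟨F', hF'⟩ := extend f' hUC
  have huI : u ∈ Set.Icc u v := ⟨le_rfl, huv.le⟩
  have hvI : v ∈ Set.Icc u v := ⟨huv.le, le_rfl⟩
  have hFu : F u = fu :=
    tendsto_nhds_unique (hF u huI (a u) (haM u huI) (hatend u huI))
      (hfu (a u) (haM u huI) (hatend u huI))
  have hFv : F v = fv :=
    tendsto_nhds_unique (hF v hvI (a v) (haM v hvI) (hatend v hvI))
      (hfv (a v) (haM v hvI) (hatend v hvI))
  -- F is continuous on [u,v]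
  have hFcont : ContinuousOn F (Set.Icc u v) := by
    rw [Metric.continuousOn_iff]
    intro x hx ε hε
    obtain ⟨δ, hδ, hfδ⟩ := hfUC (ε / 2) (by positivity)
    refine ⟨δ / 2, by positivity, fun y hy hdist => ?_⟩
    have h1 : Tendsto (fun n => f (a y n) - f (a x n)) atTop (𝓝 (F y - F x)) :=
      (hF y hy (a y) (haM y hy) (hatend y hy)).sub (hF x hx (a x) (haM x hx) (hatend x hx))
    have h2 := h1.abs
    have h4 : Tendsto (fun n => |(a y n : ℝ) - (a x n : ℝ)|) atTop (𝓝 |y - x|) :=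
      ((hatend y hy).sub (hatend x hx)).abs
    rw [Real.dist_eq] at hdist
    have hev : ∀ᶠ n in atTop, |(a y n : ℝ) - (a x n : ℝ)| < δ :=
      h4.eventually_lt_const (by linarith)
    have h5 : |F y - F x| ≤ ε / 2 := by
      apply le_of_tendsto h2
      filter_upwards [hev] with n hn
      exact hfδ (a y n) (haM y hy n) (a x n) (haM x hx n) hn.le
    rw [Real.dist_eq]
    linarith
  -- the key derivative estimate
  have hkey : ∀ ε : ℝ, 0 < ε → ∃ δ : ℝ, 0 < δ ∧ ∀ x ∈ Set.Icc u v, ∀ y ∈ Set.Icc u v,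
      y ≠ x → |y - x| < δ → |(F y - F x) / (y - x) - F' x| ≤ ε := by
    intro ε hε
    obtain ⟨δ, hδ, hu'⟩ := hunif ε hε
    refine ⟨δ, hδ, fun x hx y hy hne hlt => ?_⟩
    have hsne : y - x ≠ 0 := sub_ne_zero.mpr hne
    have h1 : Tendsto (fun n => (f (a y n) - f (a x n)) / ((a y n : ℝ) - (a x n : ℝ)))
        atTop (𝓝 ((F y - F x) / (y - x))) :=
      Tendsto.div ((hF y hy (a y) (haM y hy) (hatend y hy)).sub
        (hF x hx (a x) (haM x hx) (hatend x hx)))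
        ((hatend y hy).sub (hatend x hx)) hsne
    have h2 : Tendsto (fun n => f' (a x n)) atTop (𝓝 (F' x)) :=
      hF' x hx (a x) (haM x hx) (hatend x hx)
    have h3 := (h1.sub h2).abs
    apply le_of_tendsto h3
    have h4 : Tendsto (fun n => |(a y n : ℝ) - (a x n : ℝ)|) atTop (𝓝 |y - x|) :=
      ((hatend y hy).sub (hatend x hx)).abs
    have hpos : 0 < |y - x| := abs_pos.mpr hsne
    filter_upwards [h4.eventually_lt_const hlt, h4.eventually_const_lt hpos] with n hn1 hn2
    exact hu' (a x n) (haM x hx n) (a y n) (haM y hy n) hn2 hn1.le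
  -- F has derivative F' on (u,v)
  have hderivF : ∀ x ∈ Set.Ioo u v, HasDerivAt F (F' x) x := by
    intro x hx
    rw [hasDerivAt_iff_tendsto_slope]
    rw [Metric.tendsto_nhds]
    intro ε hε
    obtain ⟨δ, hδ, hk⟩ := hkey (ε / 2) (by positivity)
    have hmem : Set.Ioo u v ∈ 𝓝[≠] x := nhdsWithin_le_nhds (Ioo_mem_nhds hx.1 hx.2)
    have hball : Metric.ball x δ ∈ 𝓝[≠] x := nhdsWithin_le_nhds (Metric.ball_mem_nhds x hδ)
    filter_upwards [hmem, hball, self_mem_nhdsWithin] with y h1 h2 h3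
    have h4 : |y - x| < δ := by rw [← Real.dist_eq]; exact h2
    have h5 := hk x (Set.mem_Icc_of_Ioo hx) y (Set.mem_Icc_of_Ioo h1) h3 h4
    rw [Real.dist_eq, slope_def_field]
    calc |(F y - F x) / (y - x) - F' x| ≤ ε / 2 := h5
      _ < ε := by linarith
  obtain ⟨c, hc, hceq⟩ := exists_hasDerivAt_eq_slope F F' huv hFcont hderivF
  refine ⟨c, hc.1, hc.2, ?_⟩
  have : (fv - fu) / (v - u) = F' c := by rw [← hFu, ← hFv, hceq]
  rw [this]
  exact hF' c (Set.mem_Icc_of_Ioo hc)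
end

section
/- (Continuity of the integral in the partition norm) Let u < v be real numbers and let f : [u,v]_ℚ → ℝ be uniformly continuous, and let L = (ℚ)∫_u^v f be its integral. Then for every ε > 0 there exists δ > 0 such that for every tagged partition P of [u,v]_ℚ (real tags in the closed subintervals allowed, with f evaluated via its continuous extension) with Δ(P) ≤ δ one has |R(f, P) − L| ≤ ε. -/
open Filter Topology

/-- A tagged partition of [u,v]_ℚ: real partition points u = u₀ < u₁ < … < u_n = v
with rational tags b_i ∈ [u_{i−1}, u_i]_ℚ. -/
structure TaggedPartition (u v : ℝ) where
  n : ℕ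
  pts : Fin (n + 1) → ℝ
  mono : StrictMono pts
  first : pts 0 = u
  last : pts (Fin.last n) = v
  tags : Fin n → ℚ
  tag_lb : ∀ i : Fin n, pts i.castSucc ≤ (tags i : ℝ)
  tag_ub : ∀ i : Fin n, (tags i : ℝ) ≤ pts i.succ

/-- The norm Δ(P) of a tagged partition: the largest subinterval length. -/
noncomputable def TaggedPartition.norm {u v : ℝ} (P : TaggedPartition u v) : ℝ :=
  ⨆ i : Fin P.n, (P.pts i.succ - P.pts i.castSucc)

/-- The Riemann sum R(f, P). -/
noncomputable def TaggedPartition.riemannSum {u v : ℝ} (P : TaggedPartition u v)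
    (f : ℚ → ℝ) : ℝ :=
  ∑ i : Fin P.n, f (P.tags i) * (P.pts i.succ - P.pts i.castSucc)

/-- A tagged partition of [u,v]_ℚ with real tags b_i ∈ [u_{i−1}, u_i]. -/
structure RealTaggedPartition (u v : ℝ) where
  n : ℕ
  pts : Fin (n + 1) → ℝ
  mono : StrictMono pts
  first : pts 0 = u
  last : pts (Fin.last n) = v
  tags : Fin n → ℝ
  tag_lb : ∀ i : Fin n, pts i.castSucc ≤ tags i
  tag_ub : ∀ i : Fin n, tags i ≤ pts i.succ

/-- The norm Δ(P) of a real-tagged partition. -/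
noncomputable def RealTaggedPartition.norm {u v : ℝ} (P : RealTaggedPartition u v) : ℝ :=
  ⨆ i : Fin P.n, (P.pts i.succ - P.pts i.castSucc)

/-! Take δ that works for rational tags. Given a partition of norm at most δ with real tags, each
tag is a limit of rational points of its subinterval; using them as tags gives partitions of the
same norm whose Riemann sums lie within ε of `L` and converge, by the definition of the extended
values, to the sum with real tags. So that sum lies in the closed ball of radius ε about `L`. -/

lemma TaggedPartition.norm_nonneg {u v : ℝ} (P : TaggedPartition u v) : 0 ≤ P.norm :=
  Real.iSup_nonneg fun i => sub_nonneg.mpr (P.mono.monotone (Fin.castSucc_le_succ i))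

lemma TaggedPartition.exists_abs_riemannSum_sub_le {u v : ℝ} {f : ℚ → ℝ} {L : ℝ}
    (hL : ∀ P : ℕ → TaggedPartition u v,
      Tendsto (fun k => (P k).norm) atTop (𝓝 0) →
      Tendsto (fun k => (P k).riemannSum f) atTop (𝓝 L))
    {ε : ℝ} (hε : 0 < ε) :
    ∃ δ : ℝ, 0 < δ ∧ ∀ P : TaggedPartition u v, P.norm ≤ δ → |P.riemannSum f - L| ≤ ε := by
  have hlim : Tendsto (fun P : TaggedPartition u v => P.riemannSum f)
      (comap TaggedPartition.norm (𝓝 0)) (𝓝 L) :=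
    tendsto_of_seq_tendsto fun P hP => hL P (tendsto_comap.comp hP :
      Tendsto (TaggedPartition.norm ∘ P) atTop (𝓝 0))
  obtain ⟨δ, hδ, hball⟩ :=
    ((Metric.nhds_basis_closedBall.comap _).tendsto_iff Metric.nhds_basis_closedBall).mp hlim ε hε
  refine ⟨δ, hδ, fun P hP => hball P ?_⟩
  rwa [Set.mem_preimage, Metric.mem_closedBall, Real.dist_0_eq_abs, abs_of_nonneg P.norm_nonneg]

lemma exists_seq_rat_tendsto_of_mem_Icc {c d x : ℝ} (hcd : c < d) (hx : x ∈ Set.Icc c d) :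
    ∃ q : ℕ → ℚ, (∀ n, (q n : ℝ) ∈ Set.Icc c d) ∧ Tendsto (fun n => (q n : ℝ)) atTop (𝓝 x) := by
  have hclosure : x ∈ closure (Set.Ioo c d ∩ Set.range ((↑) : ℚ → ℝ)) := by
    rw [← closure_Ioo hcd.ne] at hx
    exact closure_minimal (Rat.denseRange_cast.open_subset_closure_inter isOpen_Ioo)
      isClosed_closure hx
  obtain ⟨y, hy, hlim⟩ := mem_closure_iff_seq_limit.mp hclosure
  choose q hq using fun n => (hy n).2
  refine ⟨q, fun n => ?_, ?_⟩
  · rw [hq n]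
    exact Set.Ioo_subset_Icc_self (hy n).1
  · simpa only [hq] using hlim

namespace RealTaggedPartition

variable {u v : ℝ} (P : RealTaggedPartition u v)

lemma pts_lt_pts_succ (i : Fin P.n) : P.pts i.castSucc < P.pts i.succ :=
  P.mono Fin.castSucc_lt_succ

lemma Icc_subset_Icc (i : Fin P.n) :
    Set.Icc (P.pts i.castSucc) (P.pts i.succ) ⊆ Set.Icc u v :=
  Set.Icc_subset_Icc (P.first.symm.trans_le (P.mono.monotone (Fin.zero_le _)))
    ((P.mono.monotone (Fin.le_last _)).trans_eq P.last)

def retag (a : Fin P.n → ℚ) (ha : ∀ i, (a i : ℝ) ∈ Set.Icc (P.pts i.castSucc) (P.pts i.succ)) :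
    TaggedPartition u v :=
  ⟨P.n, P.pts, P.mono, P.first, P.last, a, fun i => (ha i).1, fun i => (ha i).2⟩

variable {P} {a : Fin P.n → ℚ}
  {ha : ∀ i, (a i : ℝ) ∈ Set.Icc (P.pts i.castSucc) (P.pts i.succ)}

lemma norm_retag : (P.retag a ha).norm = P.norm := rfl

lemma riemannSum_retag (f : ℚ → ℝ) :
    (P.retag a ha).riemannSum f = ∑ i : Fin P.n, f (a i) * (P.pts i.succ - P.pts i.castSucc) :=
  rfl

end RealTaggedPartition

theorem integral_continuity_general (u v : ℝ) (f : ℚ → ℝ) (L : ℝ)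
    (hL : ∀ P : ℕ → TaggedPartition u v,
      Tendsto (fun k => (P k).norm) atTop (𝓝 0) →
      Tendsto (fun k => (P k).riemannSum f) atTop (𝓝 L)) :
    ∀ ε : ℝ, 0 < ε → ∃ δ : ℝ, 0 < δ ∧
      ∀ P : RealTaggedPartition u v, ∀ g : Fin P.n → ℝ,
        (∀ i : Fin P.n, ExtVal (RatIcc u v) f (P.tags i) (g i)) →
        P.norm ≤ δ →
        |(∑ i : Fin P.n, g i * (P.pts i.succ - P.pts i.castSucc)) - L| ≤ ε := by
  intro ε hε
  obtain ⟨δ, hδ, hclose⟩ := TaggedPartition.exists_abs_riemannSum_sub_le hL hε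
  refine ⟨δ, hδ, fun P g hg hP => ?_⟩
  choose q hq hlim using fun i =>
    exists_seq_rat_tendsto_of_mem_Icc (P.pts_lt_pts_succ i) ⟨P.tag_lb i, P.tag_ub i⟩
  let Q : ℕ → TaggedPartition u v := fun k => P.retag (fun i => q i k) (fun i => hq i k)
  have hQ : Tendsto (fun k => (Q k).riemannSum f) atTop
      (𝓝 (∑ i : Fin P.n, g i * (P.pts i.succ - P.pts i.castSucc))) := by
    simp only [Q, RealTaggedPartition.riemannSum_retag]
    exact tendsto_finsetSum _ fun i _ =>
      (hg i (q i) (fun k => P.Icc_subset_Icc i (hq i k)) (hlim i)).mul_const _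
  have hball : (∑ i : Fin P.n, g i * (P.pts i.succ - P.pts i.castSucc)) ∈ Metric.closedBall L ε :=
    Metric.isClosed_closedBall.mem_of_tendsto hQ <| Eventually.of_forall fun k =>
      hclose (Q k) (RealTaggedPartition.norm_retag ▸ hP)
  rwa [Metric.mem_closedBall, Real.dist_eq] at hball

/-- Continuity of the integral in the partition norm: if L is the integral of the UC
function f on [u,v]_ℚ, then for every ε > 0 there is δ > 0 such that every tagged
partition (real tags allowed, f evaluated via its extended values) of norm ≤ δ has
Riemann sum within ε of L. -/
theorem integral_continuity (u v : ℝ) (huv : u < v) (f : ℚ → ℝ)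
    (hf : UC (RatIcc u v) f) (L : ℝ)
    (hL : ∀ P : ℕ → TaggedPartition u v,
      Tendsto (fun k => (P k).norm) atTop (𝓝 0) →
      Tendsto (fun k => (P k).riemannSum f) atTop (𝓝 L)) :
    ∀ ε : ℝ, 0 < ε → ∃ δ : ℝ, 0 < δ ∧
      ∀ P : RealTaggedPartition u v, ∀ g : Fin P.n → ℝ,
        (∀ i : Fin P.n, ExtVal (RatIcc u v) f (P.tags i) (g i)) →
        P.norm ≤ δ →
        |(∑ i : Fin P.n, g i * (P.pts i.succ - P.pts i.castSucc)) - L| ≤ ε :=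
  integral_continuity_general u v f L hL
end

section
/- (HMC Fundamental Theorem of Analysis) Let u < v be real numbers and let f : [u,v]_ℚ → ℝ be a function whose derivative f' is defined at every point of [u,v]_ℚ, is uniform on [u,v]_ℚ, and is uniformly continuous. Then (ℚ)∫_u^v f' = f(v) − f(u): for every sequence (P_k) of tagged partitions of [u,v]_ℚ with Δ(P_k) → 0, the Riemann sums R(f', P_k) converge to f(v) − f(u), where f(u) and f(v) denote extended values of f. -/
open Filter Topology

open Finset

namespace TP

variable {u v : ℝ}

/-- ℕ-indexed partition points, constant `v` beyond `P.n`. -/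
noncomputable def p (P : TaggedPartition u v) (j : ℕ) : ℝ :=
  P.pts ⟨min j P.n, Nat.lt_succ_of_le (min_le_right _ _)⟩

lemma p_zero (P : TaggedPartition u v) : p P 0 = u := by
  rw [p]
  have h : (⟨min 0 P.n, Nat.lt_succ_of_le (min_le_right _ _)⟩ : Fin (P.n + 1)) = 0 := by
    ext; simp
  rw [h]; exact P.first

lemma p_of_ge (P : TaggedPartition u v) {j : ℕ} (hj : P.n ≤ j) : p P j = v := by
  rw [p]
  have h : (⟨min j P.n, Nat.lt_succ_of_le (min_le_right _ _)⟩ : Fin (P.n + 1)) = Fin.last P.n := by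
    ext; simp [Fin.last, min_eq_right hj]
  rw [h]; exact P.last

lemma p_mono (P : TaggedPartition u v) : Monotone (p P) := by
  intro i j hij
  exact P.mono.monotone (Fin.mk_le_mk.mpr (by omega))

lemma p_strict (P : TaggedPartition u v) {i j : ℕ} (hij : i < j) (hj : j ≤ P.n) :
    p P i < p P j :=
  P.mono (Fin.mk_lt_mk.mpr (by omega))

lemma p_mem (P : TaggedPartition u v) (j : ℕ) : u ≤ p P j ∧ p P j ≤ v := by
  constructor
  · have h := p_mono P (Nat.zero_le j); rwa [p_zero] at h
  · have h := p_mono P (le_max_left j P.n)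
    rwa [p_of_ge P (le_max_right j P.n)] at h

lemma p_succ (P : TaggedPartition u v) {i : ℕ} (hi : i < P.n) :
    p P (i + 1) = P.pts (⟨i, hi⟩ : Fin P.n).succ := by
  rw [p]; congr 1; ext; simp [Fin.val_succ]; omega

lemma p_cast (P : TaggedPartition u v) {i : ℕ} (hi : i < P.n) :
    p P i = P.pts (⟨i, hi⟩ : Fin P.n).castSucc := by
  rw [p]; congr 1; ext; simp; omega

/-- ℕ-indexed tags (junk value beyond `P.n`). -/
noncomputable def b (P : TaggedPartition u v) (i : ℕ) : ℚ :=
  if hi : i < P.n then P.tags ⟨i, hi⟩ else 0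

lemma b_lb (P : TaggedPartition u v) {i : ℕ} (hi : i < P.n) :
    p P i ≤ ((b P i : ℚ) : ℝ) := by
  rw [b, dif_pos hi, p_cast P hi]; exact P.tag_lb _

lemma b_ub (P : TaggedPartition u v) {i : ℕ} (hi : i < P.n) :
    ((b P i : ℚ) : ℝ) ≤ p P (i + 1) := by
  rw [b, dif_pos hi, p_succ P hi]; exact P.tag_ub _

lemma riemann_eq (P : TaggedPartition u v) (f : ℚ → ℝ) :
    P.riemannSum f = ∑ i ∈ range P.n, f (b P i) * (p P (i + 1) - p P i) := by
  rw [TaggedPartition.riemannSum,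
    ← Fin.sum_univ_eq_sum_range (fun i => f (b P i) * (p P (i + 1) - p P i)) P.n]
  refine Finset.sum_congr rfl fun i _ => ?_
  rw [b, dif_pos i.isLt, p_succ P i.isLt, p_cast P i.isLt]

end TP
lemma uc_chain (u v : ℝ) (g : ℚ → ℝ) (δ : ℝ) (hδ : 0 < δ)
    (h1 : ∀ a ∈ RatIcc u v, ∀ b ∈ RatIcc u v, |(a : ℝ) - (b : ℝ)| ≤ δ → |g a - g b| ≤ 1) :
    ∀ m : ℕ, ∀ a ∈ RatIcc u v, ∀ b ∈ RatIcc u v,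
      (b : ℝ) ≤ a → (a : ℝ) - b ≤ m * (δ / 2) → |g a - g b| ≤ m := by
  intro m
  induction m with
  | zero =>
    intro a ha b hb hba hab
    have h : (a : ℝ) = b := le_antisymm (by push_cast at hab ⊢; linarith) hba
    have h' : a = b := by exact_mod_cast h
    simp [h']
  | succ m ih =>
    intro a ha b hb hba hab
    by_cases hcase : (a : ℝ) - b ≤ δ
    · have := h1 a ha b hb (by rw [abs_of_nonneg (by linarith)]; exact hcase)
      push_cast
      linarith
    · push_neg at hcase
      obtain ⟨c, hc1, hc2⟩ := exists_rat_btwn (show (b : ℝ) + δ / 2 < b + δ by linarith)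
      have hcM : c ∈ RatIcc u v := ⟨by have := hb.1; linarith, by have := ha.2; linarith⟩
      have hca : (c : ℝ) ≤ a := by linarith
      have e1 : |g c - g b| ≤ 1 := h1 c hcM b hb (by rw [abs_of_nonneg (by linarith)]; linarith)
      have e2 : |g a - g c| ≤ m := by
        refine ih a ha c hcM hca ?_
        push_cast at hab ⊢
        linarith
      calc |g a - g b| ≤ |g a - g c| + |g c - g b| := abs_sub_le _ _ _
        _ ≤ (m : ℝ) + 1 := by linarith
        _ = ((m + 1 : ℕ) : ℝ) := by push_cast; ring

lemma uc_bounded (u v : ℝ) (huv : u < v) (g : ℚ → ℝ) (h : UC (RatIcc u v) g) :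
    ∃ B : ℝ, 0 ≤ B ∧ ∀ a ∈ RatIcc u v, |g a| ≤ B := by
  obtain ⟨δ, hδ, h1⟩ := h 1 one_pos
  obtain ⟨q0, hq0u, hq0v⟩ := exists_rat_btwn huv
  have hq0M : q0 ∈ RatIcc u v := ⟨hq0u.le, hq0v.le⟩
  set m := ⌈(v - u) / (δ / 2)⌉₊ with hm_def
  have hm : v - u ≤ m * (δ / 2) := by
    have h2 := Nat.le_ceil ((v - u) / (δ / 2))
    rw [div_le_iff₀ (by positivity)] at h2
    rw [hm_def]
    linarith
  refine ⟨|g q0| + m, by positivity, fun a ha => ?_⟩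
  rcases le_total (q0 : ℝ) a with hle | hle
  · have := uc_chain u v g δ hδ h1 m a ha q0 hq0M hle
      (by have := ha.2; have := hq0u; linarith)
    calc |g a| = |(g a - g q0) + g q0| := by ring_nf
      _ ≤ |g a - g q0| + |g q0| := abs_add_le _ _
      _ ≤ |g q0| + m := by linarith
  · have := uc_chain u v g δ hδ h1 m q0 hq0M a ha hle
      (by have := ha.1; have := hq0v; linarith)
    rw [abs_sub_comm] at this
    calc |g a| = |(g a - g q0) + g q0| := by ring_nf
      _ ≤ |g a - g q0| + |g q0| := abs_add_le _ _
      _ ≤ |g q0| + m := by linarith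

lemma unif_linear (u v : ℝ) (f f' : ℚ → ℝ)
    (h : UniformDeriv (RatIcc u v) f (RatIcc u v) f') (ε : ℝ) (hε : 0 < ε) :
    ∃ δ : ℝ, 0 < δ ∧ ∀ a ∈ RatIcc u v, ∀ b ∈ RatIcc u v, |(b : ℝ) - (a : ℝ)| ≤ δ →
      |f b - f a - f' a * ((b : ℝ) - (a : ℝ))| ≤ ε * |(b : ℝ) - (a : ℝ)| := by
  obtain ⟨δ, hδ, hd⟩ := h ε hε
  refine ⟨δ, hδ, fun a ha b hb hab => ?_⟩
  rcases eq_or_ne ((b : ℝ) - (a : ℝ)) 0 with h0 | h0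
  · have hba : b = a := by
      have : (b : ℝ) = a := by linarith [sub_eq_zero.mp h0]
      exact_mod_cast this
    simp [hba, h0]
  · have habs : 0 < |(b : ℝ) - (a : ℝ)| := abs_pos.mpr h0
    have h2 := hd a ha b hb habs hab
    have heq : f b - f a - f' a * ((b : ℝ) - (a : ℝ)) =
        ((f b - f a) / ((b : ℝ) - (a : ℝ)) - f' a) * ((b : ℝ) - (a : ℝ)) := by
      field_simp
    rw [heq, abs_mul]
    exact mul_le_mul_of_nonneg_right h2 (abs_nonneg _)

lemma key_est (u v : ℝ) (huv : u < v) (f f' : ℚ → ℝ) (B ε δ η : ℝ)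
    (hB0 : 0 ≤ B) (hB : ∀ a ∈ RatIcc u v, |f' a| ≤ B)
    (hε : 0 < ε) (hδ : 0 < δ)
    (hlin : ∀ a ∈ RatIcc u v, ∀ b ∈ RatIcc u v, |(b : ℝ) - (a : ℝ)| ≤ δ →
      |f b - f a - f' a * ((b : ℝ) - (a : ℝ))| ≤ ε * |(b : ℝ) - (a : ℝ)|)
    (hη : 0 < η) (hηδ : η ≤ δ / 4) (hη4 : 4 * η * (ε + B) ≤ ε)
    (P : TaggedPartition u v) (hnorm : P.norm ≤ δ / 2)
    (s t : ℚ) (hs : s ∈ RatIcc u v) (ht : t ∈ RatIcc u v)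
    (hsu : |(s : ℝ) - u| ≤ η) (htv : |(t : ℝ) - v| ≤ η) :
    |P.riemannSum f' - (f t - f s)| ≤ 2 * ε * (v - u) + 2 * ε := by
  classical
  set n := P.n with hndef
  have hn : 1 ≤ n := by
    by_contra h
    have h0 : n = 0 := by omega
    apply huv.ne
    have h1 : TP.p P 0 = u := TP.p_zero P
    have h2 : TP.p P 0 = v := TP.p_of_ge P (by omega)
    rw [← h1, h2]
  set γ := min (δ / 4) (ε / (2 * ((n : ℝ) + 1) * (ε + B) + 1)) with hγdef
  have hεB : (0 : ℝ) < 2 * ((n : ℝ) + 1) * (ε + B) + 1 := by positivity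
  have hγ0 : 0 < γ := lt_min (by positivity) (by positivity)
  have hγδ : γ ≤ δ / 4 := min_le_left _ _
  have hγε : 2 * ((n : ℝ) + 1) * γ * (ε + B) ≤ ε := by
    have h1 : γ ≤ ε / (2 * ((n : ℝ) + 1) * (ε + B) + 1) := min_le_right _ _
    rw [le_div_iff₀ hεB] at h1
    nlinarith [hγ0.le]
  -- choose rational points near each partition point
  have hgex : ∀ j : ℕ, ∃ q : ℚ, (q ∈ RatIcc u v) ∧
      |(q : ℝ) - TP.p P j| ≤ (if j = 0 ∨ n ≤ j then η else γ) ∧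
      (j = 0 → q = s) ∧ (n ≤ j → q = t) := by
    intro j
    by_cases hj0 : j = 0
    · subst hj0
      refine ⟨s, hs, ?_, fun _ => rfl, fun h => absurd h (by omega)⟩
      rw [if_pos (Or.inl rfl), TP.p_zero]
      exact hsu
    · by_cases hjn : n ≤ j
      · refine ⟨t, ht, ?_, fun h => absurd h hj0, fun _ => rfl⟩
        rw [if_pos (Or.inr hjn), TP.p_of_ge P hjn]
        exact htv
      · push_neg at hjn
        have hu : u < TP.p P j := by
          have h1 := TP.p_strict P (show 0 < j by omega) hjn.le
          rwa [TP.p_zero] at h1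
        have hv : TP.p P j ≤ v := (TP.p_mem P j).2
        obtain ⟨q, hq1, hq2⟩ := exists_rat_btwn
          (show max (TP.p P j - γ) u < TP.p P j from max_lt (by linarith) hu)
        refine ⟨q, ⟨(le_max_right _ _).trans hq1.le, hq2.le.trans hv⟩, ?_,
          fun h => absurd h hj0, fun h => absurd h (by omega)⟩
        rw [if_neg (by omega), abs_le]
        constructor
        · have := (le_max_left (TP.p P j - γ) u).trans hq1.le
          linarith
        · linarith [hq2.le, hγ0.le]
  choose a haM hag ha0 han using hgex
  set g : ℕ → ℝ := fun j => if j = 0 ∨ n ≤ j then η else γ with hgdef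
  have hg0 : ∀ j, 0 ≤ g j := by
    intro j; simp only [hgdef]; split_ifs; exacts [hη.le, hγ0.le]
  have hgδ : ∀ j, g j ≤ δ / 4 := by
    intro j; simp only [hgdef]; split_ifs; exacts [hηδ, hγδ]
  -- telescoping
  have htel : f t - f s = ∑ i ∈ range n, (f (a (i + 1)) - f (a i)) := by
    rw [Finset.sum_range_sub (fun j => f (a j)) n, han n le_rfl, ha0 0 rfl]
  have hrs : P.riemannSum f' = ∑ i ∈ range n, f' (TP.b P i) * (TP.p P (i + 1) - TP.p P i) :=
    TP.riemann_eq P f'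
  -- per-term bound
  have hterm : ∀ i ∈ range n,
      |f' (TP.b P i) * (TP.p P (i + 1) - TP.p P i) - (f (a (i + 1)) - f (a i))|
        ≤ 2 * ε * (TP.p P (i + 1) - TP.p P i) + (ε + B) * (g (i + 1) + g i) := by
    intro i hi
    rw [Finset.mem_range] at hi
    have hL0 : 0 ≤ TP.p P (i + 1) - TP.p P i := by
      have := TP.p_mono P (Nat.le_succ i); linarith
    have hLn : TP.p P (i + 1) - TP.p P i ≤ δ / 2 := by
      have h1 : TP.p P (i + 1) = P.pts (⟨i, hi⟩ : Fin n).succ := TP.p_succ P hi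
      have h2 : TP.p P i = P.pts (⟨i, hi⟩ : Fin n).castSucc := TP.p_cast P hi
      have h3 : P.pts (⟨i, hi⟩ : Fin n).succ - P.pts (⟨i, hi⟩ : Fin n).castSucc ≤ P.norm := by
        exact le_ciSup (f := fun i : Fin P.n => P.pts i.succ - P.pts i.castSucc)
          (Set.Finite.bddAbove (Set.finite_range _)) (⟨i, hi⟩ : Fin n)
      rw [h1, h2]
      linarith
    have hbi_lb : TP.p P i ≤ ((TP.b P i : ℚ) : ℝ) := TP.b_lb P hi
    have hbi_ub : ((TP.b P i : ℚ) : ℝ) ≤ TP.p P (i + 1) := TP.b_ub P hi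
    have hbiM : TP.b P i ∈ RatIcc u v :=
      ⟨(TP.p_mem P i).1.trans hbi_lb, hbi_ub.trans (TP.p_mem P (i + 1)).2⟩
    have hg1 := hag (i + 1)
    have hg2 := hag i
    rw [abs_le] at hg1 hg2
    have hd1 : |((a (i + 1) : ℚ) : ℝ) - ((TP.b P i : ℚ) : ℝ)|
        ≤ (TP.p P (i + 1) - TP.p P i) + g (i + 1) := by
      rw [abs_le]
      constructor <;> [skip; skip] <;> linarith [hg1.1, hg1.2]
    have hd2 : |((a i : ℚ) : ℝ) - ((TP.b P i : ℚ) : ℝ)|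
        ≤ (TP.p P (i + 1) - TP.p P i) + g i := by
      rw [abs_le]
      constructor <;> [skip; skip] <;> linarith [hg2.1, hg2.2]
    have hd1δ : |((a (i + 1) : ℚ) : ℝ) - ((TP.b P i : ℚ) : ℝ)| ≤ δ :=
      hd1.trans (by linarith [hgδ (i + 1)])
    have hd2δ : |((a i : ℚ) : ℝ) - ((TP.b P i : ℚ) : ℝ)| ≤ δ :=
      hd2.trans (by linarith [hgδ i])
    have est1 := hlin (TP.b P i) hbiM (a (i + 1)) (haM (i + 1)) hd1δ
    have est2 := hlin (TP.b P i) hbiM (a i) (haM i) hd2δ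
    have est1' : |f (a (i + 1)) - f (TP.b P i)
        - f' (TP.b P i) * (((a (i + 1) : ℚ) : ℝ) - ((TP.b P i : ℚ) : ℝ))|
        ≤ ε * ((TP.p P (i + 1) - TP.p P i) + g (i + 1)) :=
      est1.trans (mul_le_mul_of_nonneg_left hd1 hε.le)
    have est2' : |f (a i) - f (TP.b P i)
        - f' (TP.b P i) * (((a i : ℚ) : ℝ) - ((TP.b P i : ℚ) : ℝ))|
        ≤ ε * ((TP.p P (i + 1) - TP.p P i) + g i) :=
      est2.trans (mul_le_mul_of_nonneg_left hd2 hε.le)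
    have hfb : |f' (TP.b P i)| ≤ B := hB _ hbiM
    have hw : |((a (i + 1) : ℚ) : ℝ) - ((a i : ℚ) : ℝ) - (TP.p P (i + 1) - TP.p P i)|
        ≤ g (i + 1) + g i := by
      rw [abs_le]
      constructor <;> linarith [hg1.1, hg1.2, hg2.1, hg2.2]
    have hkey : f' (TP.b P i) * (TP.p P (i + 1) - TP.p P i) - (f (a (i + 1)) - f (a i)) =
        -(f (a (i + 1)) - f (TP.b P i)
            - f' (TP.b P i) * (((a (i + 1) : ℚ) : ℝ) - ((TP.b P i : ℚ) : ℝ)))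
        + (f (a i) - f (TP.b P i)
            - f' (TP.b P i) * (((a i : ℚ) : ℝ) - ((TP.b P i : ℚ) : ℝ)))
        + f' (TP.b P i) * ((TP.p P (i + 1) - TP.p P i)
            - (((a (i + 1) : ℚ) : ℝ) - ((a i : ℚ) : ℝ))) := by ring
    calc |f' (TP.b P i) * (TP.p P (i + 1) - TP.p P i) - (f (a (i + 1)) - f (a i))|
        ≤ |f (a (i + 1)) - f (TP.b P i)
            - f' (TP.b P i) * (((a (i + 1) : ℚ) : ℝ) - ((TP.b P i : ℚ) : ℝ))|
          + |f (a i) - f (TP.b P i)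
            - f' (TP.b P i) * (((a i : ℚ) : ℝ) - ((TP.b P i : ℚ) : ℝ))|
          + |f' (TP.b P i)|
            * |((a (i + 1) : ℚ) : ℝ) - ((a i : ℚ) : ℝ) - (TP.p P (i + 1) - TP.p P i)| := by
          rw [hkey]
          have hA := abs_add_le
            (-(f (a (i + 1)) - f (TP.b P i)
                - f' (TP.b P i) * (((a (i + 1) : ℚ) : ℝ) - ((TP.b P i : ℚ) : ℝ)))
              + (f (a i) - f (TP.b P i)
                - f' (TP.b P i) * (((a i : ℚ) : ℝ) - ((TP.b P i : ℚ) : ℝ))))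
            (f' (TP.b P i) * ((TP.p P (i + 1) - TP.p P i)
              - (((a (i + 1) : ℚ) : ℝ) - ((a i : ℚ) : ℝ))))
          have hBC := abs_add_le
            (-(f (a (i + 1)) - f (TP.b P i)
              - f' (TP.b P i) * (((a (i + 1) : ℚ) : ℝ) - ((TP.b P i : ℚ) : ℝ))))
            (f (a i) - f (TP.b P i)
              - f' (TP.b P i) * (((a i : ℚ) : ℝ) - ((TP.b P i : ℚ) : ℝ)))
          rw [abs_neg] at hBC
          have h6 : |f' (TP.b P i) * ((TP.p P (i + 1) - TP.p P i)
              - (((a (i + 1) : ℚ) : ℝ) - ((a i : ℚ) : ℝ)))|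
              = |f' (TP.b P i)|
                * |((a (i + 1) : ℚ) : ℝ) - ((a i : ℚ) : ℝ) - (TP.p P (i + 1) - TP.p P i)| := by
            rw [abs_mul, abs_sub_comm]
          linarith [hA, hBC, h6.le, h6.ge]
      _ ≤ ε * ((TP.p P (i + 1) - TP.p P i) + g (i + 1))
          + ε * ((TP.p P (i + 1) - TP.p P i) + g i) + B * (g (i + 1) + g i) := by
          have h7 : |f' (TP.b P i)|
              * |((a (i + 1) : ℚ) : ℝ) - ((a i : ℚ) : ℝ) - (TP.p P (i + 1) - TP.p P i)|
              ≤ B * (g (i + 1) + g i) :=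
            mul_le_mul hfb hw (abs_nonneg _) hB0
          linarith [est1', est2', h7]
      _ = 2 * ε * (TP.p P (i + 1) - TP.p P i) + (ε + B) * (g (i + 1) + g i) := by ring
  -- sum up
  have hsum : ∑ i ∈ range n, (TP.p P (i + 1) - TP.p P i) = v - u := by
    rw [Finset.sum_range_sub (TP.p P) n, TP.p_of_ge P le_rfl, TP.p_zero P]
  have hS : ∑ i ∈ range n, (g (i + 1) + g i) ≤ 2 * ((n : ℝ) + 1) * γ + 4 * η := by
    have h1 : ∑ i ∈ range n, g (i + 1) ≤ ∑ j ∈ range (n + 1), g j := by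
      rw [Finset.sum_range_succ' g n]
      linarith [hg0 0]
    have h2 : ∑ i ∈ range n, g i ≤ ∑ j ∈ range (n + 1), g j := by
      rw [Finset.sum_range_succ g n]
      linarith [hg0 n]
    have h3 : ∑ j ∈ range (n + 1), g j ≤ ((n : ℝ) + 1) * γ + 2 * η := by
      have hbound : ∀ j ∈ range (n + 1), g j ≤ γ + (if j = 0 ∨ n ≤ j then η else 0) := by
        intro j _
        simp only [hgdef]
        split_ifs
        · linarith [hγ0.le]
        · simp
      refine (Finset.sum_le_sum hbound).trans ?_
      rw [Finset.sum_add_distrib, Finset.sum_const, Finset.card_range]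
      have h4 : ∑ j ∈ range (n + 1), (if j = 0 ∨ n ≤ j then η else 0) = 2 * η := by
        rw [← Finset.sum_filter]
        have h5 : (range (n + 1)).filter (fun j => j = 0 ∨ n ≤ j) = {0, n} := by
          ext j
          simp only [Finset.mem_filter, Finset.mem_range, Finset.mem_insert,
            Finset.mem_singleton]
          omega
        rw [h5, Finset.sum_pair (show 0 ≠ n by omega)]
        ring
      rw [h4, nsmul_eq_mul]
      push_cast
      linarith
    rw [Finset.sum_add_distrib]
    linarith
  calc |P.riemannSum f' - (f t - f s)|
      = |∑ i ∈ range n, (f' (TP.b P i) * (TP.p P (i + 1) - TP.p P i)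
          - (f (a (i + 1)) - f (a i)))| := by
        rw [hrs, htel, ← Finset.sum_sub_distrib]
    _ ≤ ∑ i ∈ range n, |f' (TP.b P i) * (TP.p P (i + 1) - TP.p P i)
          - (f (a (i + 1)) - f (a i))| := Finset.abs_sum_le_sum_abs _ _
    _ ≤ ∑ i ∈ range n, (2 * ε * (TP.p P (i + 1) - TP.p P i)
          + (ε + B) * (g (i + 1) + g i)) := Finset.sum_le_sum hterm
    _ = 2 * ε * (v - u) + (ε + B) * ∑ i ∈ range n, (g (i + 1) + g i) := by
        rw [Finset.sum_add_distrib, ← Finset.mul_sum, ← Finset.mul_sum, hsum]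
    _ ≤ 2 * ε * (v - u) + 2 * ε := by
        have h8 : (ε + B) * ∑ i ∈ range n, (g (i + 1) + g i)
            ≤ (ε + B) * (2 * ((n : ℝ) + 1) * γ + 4 * η) :=
          mul_le_mul_of_nonneg_left hS (by linarith)
        nlinarith [hγε, hη4]

/-- HMC Fundamental Theorem of Analysis: if f : [u,v]_ℚ → ℝ has a derivative f'
defined everywhere, uniform and UC on [u,v]_ℚ, then (ℚ)∫_u^v f' = f(v) − f(u):
every sequence of tagged partitions with norms tending to 0 has Riemann sums of f'
tending to f(v) − f(u) (extended values of f). -/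
theorem hmc_fta (u v : ℝ) (huv : u < v) (f f' : ℚ → ℝ)
    (hderiv : ∀ a ∈ RatIcc u v, HasDerivAtPt (RatIcc u v) f a (f' a))
    (hunif : UniformDeriv (RatIcc u v) f (RatIcc u v) f')
    (hUC : UC (RatIcc u v) f')
    (fu fv : ℝ)
    (hfu : ExtVal (RatIcc u v) f u fu)
    (hfv : ExtVal (RatIcc u v) f v fv) :
    ∀ P : ℕ → TaggedPartition u v,
      Tendsto (fun k => (P k).norm) atTop (𝓝 0) →
      Tendsto (fun k => (P k).riemannSum f') atTop (𝓝 (fv - fu)) := by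
  intro P hP
  obtain ⟨B, hB0, hB⟩ := uc_bounded u v huv f' hUC
  -- endpoint sequences
  have hex_s : ∀ k : ℕ, ∃ q : ℚ, u < (q : ℝ) ∧ (q : ℝ) < min (u + 1 / ((k : ℝ) + 1)) v := by
    intro k
    refine exists_rat_btwn (lt_min ?_ huv)
    have : (0 : ℝ) < 1 / ((k : ℝ) + 1) := by positivity
    linarith
  choose s hs1 hs2 using hex_s
  have hex_t : ∀ k : ℕ, ∃ q : ℚ, max (v - 1 / ((k : ℝ) + 1)) u < (q : ℝ) ∧ (q : ℝ) < v := by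
    intro k
    refine exists_rat_btwn (max_lt ?_ huv)
    have : (0 : ℝ) < 1 / ((k : ℝ) + 1) := by positivity
    linarith
  choose t ht1 ht2 using hex_t
  have hsM : ∀ k, s k ∈ RatIcc u v :=
    fun k => ⟨(hs1 k).le, ((hs2 k).trans_le (min_le_right _ _)).le⟩
  have htM : ∀ k, t k ∈ RatIcc u v :=
    fun k => ⟨((le_max_right _ _).trans (ht1 k).le), (ht2 k).le⟩
  have hinv : Tendsto (fun k : ℕ => 1 / ((k : ℝ) + 1)) atTop (𝓝 0) :=
    tendsto_one_div_add_atTop_nhds_zero_nat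
  have hsu : Tendsto (fun k => ((s k : ℝ))) atTop (𝓝 u) := by
    refine tendsto_of_tendsto_of_tendsto_of_le_of_le (f := fun k => ((s k : ℝ)))
      (g := fun _ => u) (h := fun k => u + 1 / ((k : ℝ) + 1))
      tendsto_const_nhds (by simpa using tendsto_const_nhds.add hinv) ?_ ?_
    · exact fun k => (hs1 k).le
    · exact fun k => ((hs2 k).trans_le (min_le_left _ _)).le
  have htv : Tendsto (fun k => ((t k : ℝ))) atTop (𝓝 v) := by
    refine tendsto_of_tendsto_of_tendsto_of_le_of_le (f := fun k => ((t k : ℝ)))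
      (g := fun k => v - 1 / ((k : ℝ) + 1)) (h := fun _ => v)
      (by simpa using tendsto_const_nhds.sub hinv) tendsto_const_nhds ?_ ?_
    · exact fun k => ((le_max_left _ _).trans (ht1 k).le)
    · exact fun k => (ht2 k).le
  have hfsk := hfu s hsM hsu
  have hftk := hfv t htM htv
  have main : Tendsto (fun k => (P k).riemannSum f' - (f (t k) - f (s k))) atTop (𝓝 0) := by
    rw [Metric.tendsto_atTop]
    intro ε0 hε0
    set ε := ε0 / (2 * (v - u) + 4) with hεdef
    have hden : (0 : ℝ) < 2 * (v - u) + 4 := by linarith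
    have hε : 0 < ε := div_pos hε0 hden
    obtain ⟨δ, hδ, hlin⟩ := unif_linear u v f f' hunif ε hε
    obtain ⟨N1, hN1⟩ := (Metric.tendsto_atTop.mp hP) (δ / 2) (by positivity)
    set c := min (δ / 4) (ε / (4 * (ε + B) + 1)) with hcdef
    have hc : 0 < c := lt_min (by positivity) (by positivity)
    obtain ⟨N2, hN2⟩ := (Metric.tendsto_atTop.mp hinv) c hc
    refine ⟨max N1 N2, fun k hk => ?_⟩
    have hk1 := hN1 k (le_of_max_le_left hk)
    have hk2 := hN2 k (le_of_max_le_right hk)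
    rw [Real.dist_eq, sub_zero] at hk1 hk2
    have hnorm : (P k).norm ≤ δ / 2 := (le_abs_self _).trans hk1.le
    have hη' : 1 / ((k : ℝ) + 1) ≤ c := (le_abs_self _).trans hk2.le
    have hηpos : 0 < 1 / ((k : ℝ) + 1) := by positivity
    have hη4 : 4 * (1 / ((k : ℝ) + 1)) * (ε + B) ≤ ε := by
      have h1 : 1 / ((k : ℝ) + 1) ≤ ε / (4 * (ε + B) + 1) := hη'.trans (min_le_right _ _)
      rw [le_div_iff₀ (by positivity)] at h1
      nlinarith [hηpos.le]
    have hsub : |(s k : ℝ) - u| ≤ 1 / ((k : ℝ) + 1) := by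
      rw [abs_of_nonneg (by linarith [hs1 k])]
      have := (hs2 k).trans_le (min_le_left _ _)
      linarith
    have htvb : |(t k : ℝ) - v| ≤ 1 / ((k : ℝ) + 1) := by
      rw [abs_of_nonpos (by linarith [ht2 k])]
      have := (le_max_left (v - 1 / ((k : ℝ) + 1)) u).trans (ht1 k).le
      linarith
    have hkey := key_est u v huv f f' B ε δ (1 / ((k : ℝ) + 1)) hB0 hB hε hδ hlin
      hηpos (hη'.trans (min_le_left _ _)) hη4 (P k) hnorm (s k) (t k) (hsM k) (htM k)
      hsub htvb
    rw [Real.dist_eq, sub_zero]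
    refine hkey.trans_lt ?_
    have hmul : ε * (2 * (v - u) + 4) = ε0 := div_mul_cancel₀ ε0 hden.ne'
    nlinarith [hε]
  have hfinal := main.add (hftk.sub hfsk)
  rw [zero_add] at hfinal
  convert hfinal using 2 with k
  ring
end

section
/- (Quasi-formal Euler's identity) For every natural number k, the function y ↦ ∑_{n=0}^∞ (−1)^n y^{n+k+1} / (n! (n+k+1)) (which is the formal primitive of the power series of a^k e^{−a} evaluated at y; the series converges absolutely for every real y) tends to k! as y → +∞. -/
open Filter Topology MeasureTheory Set

/-!
Integrating the exponential series of `t ^ k * exp (-t)` term by term over `[0, y]` (dominated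
convergence, with the constant bound `|y| ^ (n + k) / n!`) shows that the series is
`∫ t in 0..y, t ^ k * exp (-t)`, which tends to the Gamma integral `Γ (k + 1) = k!`.
-/

namespace QuasiFormalEuler

lemma abs_term_le (k : ℕ) (y : ℝ) (n : ℕ) :
    |(-1 : ℝ) ^ n * y ^ (n + k + 1) / ((n.factorial : ℝ) * ((n : ℝ) + k + 1))|
      ≤ |y| ^ (k + 1) * (|y| ^ n / n.factorial) := by
  have hpos : (0 : ℝ) < n.factorial := by positivity
  have hge : (1 : ℝ) ≤ (n : ℝ) + k + 1 := le_add_of_nonneg_left (by positivity)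
  rw [abs_div, abs_mul, abs_pow, abs_neg, abs_one, one_pow, one_mul, abs_pow,
    abs_of_pos (mul_pos hpos (by positivity)), ← mul_div_assoc, ← pow_add,
    show k + 1 + n = n + k + 1 by ring]
  exact div_le_div_of_nonneg_left (by positivity) hpos (le_mul_of_one_le_right hpos.le hge)

lemma summable_abs_term (k : ℕ) (y : ℝ) :
    Summable fun n : ℕ =>
      |(-1 : ℝ) ^ n * y ^ (n + k + 1) / ((n.factorial : ℝ) * ((n : ℝ) + k + 1))| :=
  ((Real.summable_pow_div_factorial |y|).mul_left _).of_nonneg_of_le (fun _ => abs_nonneg _)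
    (abs_term_le k y)

lemma hasSum_pow_mul_exp_neg (k : ℕ) (t : ℝ) :
    HasSum (fun n : ℕ => (-1 : ℝ) ^ n * t ^ (n + k) / n.factorial) (t ^ k * Real.exp (-t)) := by
  have h := (NormedSpace.expSeries_div_hasSum_exp (-t)).mul_left (t ^ k)
  rw [← Real.exp_eq_exp_ℝ] at h
  convert h using 2 with n
  · rfl
  · rw [neg_pow, pow_add]
    ring

lemma integral_neg_one_pow_mul_pow_div_factorial (k n : ℕ) (y : ℝ) :
    ∫ t in (0 : ℝ)..y, (-1 : ℝ) ^ n * t ^ (n + k) / n.factorial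
      = (-1 : ℝ) ^ n * y ^ (n + k + 1) / ((n.factorial : ℝ) * ((n : ℝ) + k + 1)) := by
  rw [intervalIntegral.integral_div, intervalIntegral.integral_const_mul, integral_pow]
  push_cast
  rw [zero_pow (Nat.succ_ne_zero _), sub_zero]
  field_simp

lemma hasSum_integral_pow_mul_exp_neg (k : ℕ) (y : ℝ) :
    HasSum (fun n : ℕ => (-1 : ℝ) ^ n * y ^ (n + k + 1) / ((n.factorial : ℝ) * ((n : ℝ) + k + 1)))
      (∫ t in (0 : ℝ)..y, t ^ k * Real.exp (-t)) := by
  simp_rw [← integral_neg_one_pow_mul_pow_div_factorial]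
  refine intervalIntegral.hasSum_integral_of_dominated_convergence
    (fun n _ => |y| ^ (n + k) / n.factorial)
    (fun _ => Continuous.aestronglyMeasurable (by fun_prop)) (fun _ => ae_of_all _ ?_)
    (ae_of_all _ fun _ _ => ?_) intervalIntegrable_const
    (ae_of_all _ fun t _ => hasSum_pow_mul_exp_neg k t)
  · intro t ht
    have hty : |t| ≤ |y| := by
      simpa using abs_sub_left_of_mem_uIcc (uIoc_subset_uIcc ht)
    rw [norm_div, norm_mul, norm_pow, norm_neg, norm_one, one_pow, one_mul, norm_pow,
      Real.norm_eq_abs, Real.norm_natCast]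
    gcongr
  · simp_rw [pow_add, mul_div_right_comm]
    exact (Real.summable_pow_div_factorial |y|).mul_right _

lemma integrableOn_pow_mul_exp_neg (k : ℕ) :
    IntegrableOn (fun t : ℝ => t ^ k * Real.exp (-t)) (Ioi 0) := by
  refine (Real.GammaIntegral_convergent (s := k + 1) (by positivity)).congr_fun (fun t _ => ?_)
    measurableSet_Ioi
  simp only [add_sub_cancel_right, Real.rpow_natCast, mul_comm]

lemma integral_Ioi_pow_mul_exp_neg (k : ℕ) :
    ∫ t in Ioi (0 : ℝ), t ^ k * Real.exp (-t) = k.factorial := by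
  rw [← Real.Gamma_nat_eq_factorial, Real.Gamma_eq_integral (by positivity)]
  refine setIntegral_congr_fun measurableSet_Ioi fun t _ => ?_
  rw [add_sub_cancel_right, Real.rpow_natCast, mul_comm]

end QuasiFormalEuler

open QuasiFormalEuler in
/-- Quasi-formal Euler's identity: the value at y of the formal primitive of the
power series of a^k e^{−a}, i.e. ∑_{n=0}^∞ (−1)^n y^{n+k+1}/(n!(n+k+1)) (a series
converging absolutely for every real y), tends to k! as y → +∞. -/
theorem quasi_formal_euler (k : ℕ) :
    (∀ y : ℝ, Summable fun n : ℕ =>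
      |(-1 : ℝ) ^ n * y ^ (n + k + 1) / ((n.factorial : ℝ) * ((n : ℝ) + k + 1))|) ∧
    Tendsto (fun y : ℝ =>
        ∑' n : ℕ, (-1 : ℝ) ^ n * y ^ (n + k + 1) / ((n.factorial : ℝ) * ((n : ℝ) + k + 1)))
      atTop (𝓝 (k.factorial : ℝ)) := by
  refine ⟨summable_abs_term k, ?_⟩
  have h := intervalIntegral_tendsto_integral_Ioi 0 (integrableOn_pow_mul_exp_neg k) tendsto_id
  rw [integral_Ioi_pow_mul_exp_neg] at h
  exact h.congr fun y => (hasSum_integral_pow_mul_exp_neg k y).tsum_eq.symm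
end

section
/- (Shifting the interval for the quasi-formal Newton integral) Let x : ℕ → ℝ be the coefficients of a convergent formal power series and let u, v, t be real numbers. For each n define y_n = ∑_{m=n}^∞ C(m,n) x_m t^{m−n} (the series converges absolutely). Then ∑_{n=0}^∞ y_n (v^{n+1} − u^{n+1})/(n+1) = ∑_{n=0}^∞ x_n ((v+t)^{n+1} − (u+t)^{n+1})/(n+1), with all series converging absolutely. -/
/-!
Fix `w` and consider the double series over `(n, m)` with terms
`C(n+m, n) x_{n+m} t^m w^(n+1)/(n+1)`. Its `n`-th row sums to `y_n w^(n+1)/(n+1)`, while its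
antidiagonal `n + m = k` sums to `x_k ((w+t)^(k+1) - t^(k+1))/(k+1)` by the binomial theorem,
because `(k+1) C(k, n) = C(k+1, n+1) (n+1)`. The absolute values form the same double series for
`|x|, |t|, |w|`, whose antidiagonal sums are at most `|x_k| (|w|+|t|)^(k+1)`; so the series is
absolutely summable and both ways of summing it agree. Subtracting the identities for `w = u` from
those for `w = v` gives the theorem.
-/

open Filter Topology Finset

section Antidiagonal

variable {A α : Type*} [AddCommMonoid A] [HasAntidiagonal A]

theorem HasSum.sum_antidiagonal [AddCommMonoid α] [TopologicalSpace α] [ContinuousAdd α]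
    [RegularSpace α] {f : A × A → α} {a : α} (hf : HasSum f a) :
    HasSum (fun n ↦ ∑ p ∈ antidiagonal n, f p) a :=
  (HasAntidiagonal.sigmaAntidiagonalEquivProd.hasSum_iff.mpr hf).sigma fun n ↦ by
    rw [← sum_coe_sort]
    exact hasSum_fintype _

theorem summable_of_nonneg_of_summable_sum_antidiagonal {f : A × A → ℝ} (hf : 0 ≤ f)
    (h : Summable fun n ↦ ∑ p ∈ antidiagonal n, f p) : Summable f := by
  refine HasAntidiagonal.sigmaAntidiagonalEquivProd.summable_iff.mp
    ((summable_sigma_of_nonneg fun _ ↦ hf _).mpr ⟨fun n ↦ (hasSum_fintype _).summable, ?_⟩)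
  simpa only [tsum_fintype, HasAntidiagonal.sigmaAntidiagonalEquivProd_apply, sum_coe_sort]
    using h

end Antidiagonal

theorem summable_abs_mul_pow_of_tendsto {x : ℕ → ℝ}
    (hx : ∀ c : ℝ, 0 < c → Tendsto (fun n ↦ x n * c ^ n) atTop (𝓝 0)) (c : ℝ) :
    Summable fun n ↦ |x n * c ^ n| := by
  have hbound : ∀ᶠ n in atTop, |x n * (2 * |c| + 1) ^ n| ≤ 1 :=
    (hx _ (by positivity)).abs.eventually (ge_mem_nhds (by norm_num))
  refine .of_norm_bounded_eventually_nat summable_geometric_two ?_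
  filter_upwards [hbound] with n hn
  calc ‖|x n * c ^ n|‖ = |x n| * |c| ^ n := by simp [abs_mul, abs_pow]
    _ ≤ |x n| * ((2 * |c| + 1) / 2) ^ n := by gcongr; linarith
    _ = |x n * (2 * |c| + 1) ^ n| * (1 / 2) ^ n := by
        rw [abs_mul, abs_pow, abs_of_pos (by positivity : (0 : ℝ) < 2 * |c| + 1), div_pow,
          div_pow]
        ring
    _ ≤ (1 / 2) ^ n := mul_le_of_le_one_left (by positivity) hn

noncomputable def shiftedPrimitiveTerm (x : ℕ → ℝ) (t w : ℝ) (p : ℕ × ℕ) : ℝ :=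
  ((p.1 + p.2).choose p.1 : ℝ) * x (p.1 + p.2) * t ^ p.2 * (w ^ (p.1 + 1) / (p.1 + 1))

theorem sum_antidiagonal_shiftedPrimitiveTerm (x : ℕ → ℝ) (t w : ℝ) (k : ℕ) :
    ∑ p ∈ antidiagonal k, shiftedPrimitiveTerm x t w p =
      x k * (((w + t) ^ (k + 1) - t ^ (k + 1)) / (k + 1)) := by
  have hbinom : (w + t) ^ (k + 1) - t ^ (k + 1) =
      ∑ p ∈ antidiagonal k, ((k + 1).choose (p.1 + 1) : ℝ) * w ^ (p.1 + 1) * t ^ p.2 := by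
    rw [(Commute.all w t).add_pow', Nat.sum_antidiagonal_succ]
    simp [nsmul_eq_mul, mul_assoc]
  rw [hbinom, sum_div, mul_sum]
  refine sum_congr rfl fun p hp ↦ ?_
  obtain rfl := mem_antidiagonal.mp hp
  have hchoose : ((p.1 + p.2 + 1 : ℕ) : ℝ) * (p.1 + p.2).choose p.1 =
      (p.1 + p.2 + 1).choose (p.1 + 1) * (p.1 + 1 : ℕ) := by
    exact_mod_cast Nat.add_one_mul_choose_eq _ _
  simp only [shiftedPrimitiveTerm]
  push_cast at hchoose ⊢
  field_simp
  linear_combination (x (p.1 + p.2) * t ^ p.2 * w ^ (p.1 + 1)) * hchoose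

theorem abs_shiftedPrimitiveTerm (x : ℕ → ℝ) (t w : ℝ) (p : ℕ × ℕ) :
    |shiftedPrimitiveTerm x t w p| = shiftedPrimitiveTerm (fun n ↦ |x n|) |t| |w| p := by
  simp only [shiftedPrimitiveTerm, abs_mul, abs_div, abs_pow, Nat.abs_cast]
  congr
  exact abs_of_pos (by positivity)

section ConvergentSeries

variable {x : ℕ → ℝ} (hx : ∀ c : ℝ, 0 < c → Tendsto (fun n ↦ x n * c ^ n) atTop (𝓝 0))
include hx

theorem summable_abs_shiftedPrimitiveTerm (t w : ℝ) :
    Summable fun p ↦ |shiftedPrimitiveTerm x t w p| := by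
  simp only [abs_shiftedPrimitiveTerm]
  have hnonneg : ∀ p, 0 ≤ shiftedPrimitiveTerm (fun n ↦ |x n|) |t| |w| p := fun p ↦ by
    rw [← abs_shiftedPrimitiveTerm]
    exact abs_nonneg _
  refine summable_of_nonneg_of_summable_sum_antidiagonal hnonneg <|
    ((summable_abs_mul_pow_of_tendsto hx (|w| + |t|)).mul_right (|w| + |t|)).of_nonneg_of_le
      (fun k ↦ sum_nonneg fun p _ ↦ hnonneg p) fun k ↦ ?_
  rw [sum_antidiagonal_shiftedPrimitiveTerm, abs_mul, abs_pow,
    abs_of_nonneg (by positivity : 0 ≤ |w| + |t|), mul_assoc, ← pow_succ]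
  gcongr
  calc _ ≤ (|w| + |t|) ^ (k + 1) - |t| ^ (k + 1) :=
        div_le_self (sub_nonneg.mpr (by gcongr; simp)) (by simp)
    _ ≤ (|w| + |t|) ^ (k + 1) := sub_le_self _ (by positivity)

theorem summable_abs_choose_mul_pow (t : ℝ) (n : ℕ) :
    Summable fun m : ℕ ↦ |((n + m).choose n : ℝ) * x (n + m) * t ^ m| := by
  refine (((summable_abs_shiftedPrimitiveTerm hx t 1).prod_factor n).mul_left ((n : ℝ) + 1)).congr
    fun m ↦ ?_
  simp only [shiftedPrimitiveTerm, one_pow, abs_mul, abs_div, abs_one,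
    abs_of_pos (by positivity : (0 : ℝ) < n + 1)]
  field_simp

theorem hasSum_shiftedPrimitiveTerm_rows (t w : ℝ) :
    HasSum
      (fun n : ℕ ↦ (∑' m : ℕ, ((n + m).choose n : ℝ) * x (n + m) * t ^ m) * (w ^ (n + 1) / (n + 1)))
      (∑' p, shiftedPrimitiveTerm x t w p) := by
  have hsum := (summable_abs_shiftedPrimitiveTerm hx t w).of_abs
  refine hsum.hasSum.prod_fiberwise fun n ↦ ?_
  rw [← tsum_mul_right]
  exact (hsum.prod_factor n).hasSum

theorem hasSum_shiftedPrimitiveTerm_antidiagonal (t w : ℝ) :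
    HasSum (fun k ↦ x k * (((w + t) ^ (k + 1) - t ^ (k + 1)) / (k + 1)))
      (∑' p, shiftedPrimitiveTerm x t w p) := by
  simpa only [sum_antidiagonal_shiftedPrimitiveTerm] using
    (summable_abs_shiftedPrimitiveTerm hx t w).of_abs.hasSum.sum_antidiagonal

end ConvergentSeries

/-- Shifting the interval for the quasi-formal Newton integral: if x is the
coefficient sequence of a convergent formal power series and y is the coefficient
sequence of its quasi-formal shift by t, then the Newton integral of the shifted
series from u to v equals the Newton integral of the original series from u+t to
v+t; all series converge absolutely. -/
theorem newton_integral_shift (x : ℕ → ℝ)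
    (hx : ∀ c : ℝ, 0 < c → Tendsto (fun n => x n * c ^ n) atTop (𝓝 0))
    (u v t : ℝ) (y : ℕ → ℝ)
    (hy : ∀ n : ℕ, y n = ∑' m : ℕ, (((n + m).choose n : ℝ) * x (n + m) * t ^ m)) :
    (∀ n : ℕ, Summable fun m : ℕ => |((n + m).choose n : ℝ) * x (n + m) * t ^ m|) ∧
    (Summable fun n : ℕ => |y n * (v ^ (n + 1) - u ^ (n + 1)) / ((n : ℝ) + 1)|) ∧
    (Summable fun n : ℕ =>
      |x n * ((v + t) ^ (n + 1) - (u + t) ^ (n + 1)) / ((n : ℝ) + 1)|) ∧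
    (∑' n : ℕ, y n * (v ^ (n + 1) - u ^ (n + 1)) / ((n : ℝ) + 1)) =
      ∑' n : ℕ, x n * ((v + t) ^ (n + 1) - (u + t) ^ (n + 1)) / ((n : ℝ) + 1) := by
  set S : ℝ → ℝ := fun w ↦ ∑' p, shiftedPrimitiveTerm x t w p
  have hrows : HasSum (fun n : ℕ ↦ y n * (v ^ (n + 1) - u ^ (n + 1)) / ((n : ℝ) + 1))
      (S v - S u) := by
    refine ((hasSum_shiftedPrimitiveTerm_rows hx t v).sub
      (hasSum_shiftedPrimitiveTerm_rows hx t u)).congr_fun fun n ↦ ?_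
    rw [hy n]
    ring
  have hdiag : HasSum
      (fun n : ℕ ↦ x n * ((v + t) ^ (n + 1) - (u + t) ^ (n + 1)) / ((n : ℝ) + 1)) (S v - S u) := by
    refine ((hasSum_shiftedPrimitiveTerm_antidiagonal hx t v).sub
      (hasSum_shiftedPrimitiveTerm_antidiagonal hx t u)).congr_fun fun n ↦ ?_
    ring
  exact ⟨summable_abs_choose_mul_pow hx t, summable_abs_iff.mpr hrows.summable,
    summable_abs_iff.mpr hdiag.summable, hrows.tsum_eq.trans hdiag.tsum_eq.symm⟩
end

section
/- (Products and quasi-formal shifts) Let x, y : ℕ → ℝ be coefficients of two convergent formal power series and let t ∈ ℝ. Let z_n = ∑_{k=0}^n x_k y_{n−k} be the Cauchy product coefficients. Then for every n, ∑_{m=n}^∞ C(m,n) z_m t^{m−n} = ∑_{k=0}^n (∑_{m=k}^∞ C(m,k) x_m t^{m−k}) · (∑_{m=n−k}^∞ C(m,n−k) y_m t^{m−(n−k)}), i.e. the quasi-formal shift of the Cauchy product equals the Cauchy product of the quasi-formal shifts; all the series involved converge absolutely. -/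
open Filter Topology Finset

/-!
The `n`-th coefficient of the shift is `∑ₐ C(a, n) x_a t^(a - n)`. Since
`C(a, n) |t|^(a - n) ≤ (1 + |t|)^a` and `∑ₐ |x_a| (1 + |t|)^a < ∞` (as `x_a c^a` is bounded for
`c = 2 + |t|`), these series converge absolutely; the same holds for `z`, because
`z_a r^a` is the Cauchy product of `x_a r^a` and `y_a r^a`. The identity then follows by expanding
each product of two shifted series as an absolutely convergent Cauchy product and applying
Vandermonde's identity `C(i + j, n) = ∑ₖ C(i, k) C(j, n - k)` termwise.
-/

lemma summable_abs_mul_pow_of_tendsto_mul_pow {x : ℕ → ℝ}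
    (hx : ∀ c : ℝ, 0 < c → Tendsto (fun n => x n * c ^ n) atTop (𝓝 0)) (r : ℝ) :
    Summable fun n => |x n * r ^ n| := by
  set c := |r| + 1
  have hc : 0 < c := by positivity
  obtain ⟨M, hM⟩ := (hx c hc).norm.bddAbove_range
  refine Summable.of_nonneg_of_le (fun _ => abs_nonneg _) (fun n => ?_)
    ((summable_geometric_of_lt_one (by positivity) ((div_lt_one hc).2 (lt_add_one _))).mul_left M)
  calc |x n * r ^ n| = ‖x n * c ^ n‖ * (|r| / c) ^ n := by
        rw [Real.norm_eq_abs, abs_mul, abs_mul, abs_pow, abs_of_pos (pow_pos hc n), div_pow]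
        field_simp
    _ ≤ M * (|r| / c) ^ n := by gcongr; exact hM ⟨n, rfl⟩

lemma summable_abs_cauchyProduct_mul_pow {x y : ℕ → ℝ} {r : ℝ}
    (hx : Summable fun n => |x n * r ^ n|) (hy : Summable fun n => |y n * r ^ n|) :
    Summable fun n => |(∑ k ∈ range (n + 1), x k * y (n - k)) * r ^ n| := by
  refine (summable_norm_sum_mul_range_of_summable_norm (f := fun n => x n * r ^ n)
    (g := fun n => y n * r ^ n) hx hy).congr fun n => ?_
  rw [Real.norm_eq_abs, sum_mul]
  congr 1
  refine sum_congr rfl fun k hk => ?_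
  rw [← pow_mul_pow_sub r (mem_range_succ_iff.1 hk)]
  ring

lemma choose_mul_pow_sub_le (a k : ℕ) {t : ℝ} (ht : 0 ≤ t) :
    (a.choose k : ℝ) * t ^ (a - k) ≤ (1 + t) ^ a := by
  rcases le_or_gt k a with hka | hak
  · calc (a.choose k : ℝ) * t ^ (a - k) = t ^ (a - k) * 1 ^ (a - (a - k)) * a.choose (a - k) := by
          rw [Nat.choose_symm hka, one_pow, mul_one, mul_comm]
      _ ≤ ∑ m ∈ range (a + 1), t ^ m * 1 ^ (a - m) * a.choose m :=
          single_le_sum (f := fun m => t ^ m * 1 ^ (a - m) * (a.choose m : ℝ))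
            (fun m _ => by have := pow_nonneg ht m; positivity) (mem_range.2 (by omega))
      _ = (1 + t) ^ a := by rw [add_comm 1 t, add_pow]
  · rw [Nat.choose_eq_zero_of_lt hak, Nat.cast_zero, zero_mul]
    positivity

/-- The `a`-th summand `C(a, k) x_a t^(a - k)` of the `k`-th coefficient of the shift `f(a + t)`;
it vanishes for `a < k`, which makes the truncated subtraction harmless. -/
def shiftTerm (x : ℕ → ℝ) (t : ℝ) (k a : ℕ) : ℝ := a.choose k * x a * t ^ (a - k)

section shiftTerm

variable (x y : ℕ → ℝ) (t : ℝ)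

lemma shiftTerm_add_left (k m : ℕ) :
    shiftTerm x t k (k + m) = ((k + m).choose k : ℝ) * x (k + m) * t ^ m := by
  rw [shiftTerm, Nat.add_sub_cancel_left]

lemma shiftTerm_eq_zero_of_notMem_range {k a : ℕ} (ha : a ∉ Set.range (k + ·)) :
    shiftTerm x t k a = 0 := by
  have hak : a < k := by
    by_contra h
    exact ha ⟨a - k, Nat.add_sub_cancel' (not_lt.1 h)⟩
  rw [shiftTerm, Nat.choose_eq_zero_of_lt hak, Nat.cast_zero, zero_mul, zero_mul]

lemma summable_abs_shiftTerm_iff (k : ℕ) :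
    (Summable fun m => |((k + m).choose k : ℝ) * x (k + m) * t ^ m|) ↔
      Summable fun a => |shiftTerm x t k a| := by
  simp only [← shiftTerm_add_left]
  exact (add_right_injective k).summable_iff (f := fun a => |shiftTerm x t k a|) fun a ha => by
    rw [shiftTerm_eq_zero_of_notMem_range x t ha, abs_zero]

lemma tsum_shiftTerm (k : ℕ) :
    ∑' m, ((k + m).choose k : ℝ) * x (k + m) * t ^ m = ∑' a, shiftTerm x t k a := by
  simp only [← shiftTerm_add_left]
  exact (add_right_injective k).tsum_eq fun a ha =>
    by_contra fun h => ha (shiftTerm_eq_zero_of_notMem_range x t h)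

lemma sum_shiftTerm_mul_shiftTerm (n i j : ℕ) :
    ∑ k ∈ range (n + 1), shiftTerm x t k i * shiftTerm y t (n - k) j =
      (i + j).choose n * (x i * y j) * t ^ (i + j - n) := by
  have hterm : ∀ k ∈ range (n + 1), shiftTerm x t k i * shiftTerm y t (n - k) j =
      ((i.choose k * j.choose (n - k) : ℕ) : ℝ) * (x i * y j) * t ^ (i + j - n) := by
    intro k hk
    have hkn := mem_range_succ_iff.1 hk
    by_cases hki : k ≤ i
    · by_cases hkj : n - k ≤ j
      · rw [shiftTerm, shiftTerm, show i + j - n = (i - k) + (j - (n - k)) by omega, pow_add]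
        push_cast
        ring
      · simp [shiftTerm, Nat.choose_eq_zero_of_lt (not_le.1 hkj)]
    · simp [shiftTerm, Nat.choose_eq_zero_of_lt (not_le.1 hki)]
  rw [sum_congr rfl hterm, ← sum_mul, ← sum_mul, ← Nat.cast_sum, Nat.add_choose_eq,
    Nat.sum_antidiagonal_eq_sum_range_succ_mk]

lemma shiftTerm_cauchyProduct {z : ℕ → ℝ}
    (hz : ∀ n, z n = ∑ k ∈ range (n + 1), x k * y (n - k)) (n s : ℕ) :
    shiftTerm z t n s = ∑ k ∈ range (n + 1), ∑ i ∈ range (s + 1),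
      shiftTerm x t k i * shiftTerm y t (n - k) (s - i) := by
  rw [sum_comm, shiftTerm, hz, mul_sum, sum_mul]
  refine sum_congr rfl fun i hi => ?_
  rw [sum_shiftTerm_mul_shiftTerm, Nat.add_sub_cancel' (mem_range_succ_iff.1 hi)]

end shiftTerm

lemma summable_abs_shiftTerm {x : ℕ → ℝ} (t : ℝ) (hx : Summable fun a => |x a * (1 + |t|) ^ a|)
    (k : ℕ) : Summable fun a => |shiftTerm x t k a| := by
  refine hx.of_nonneg_of_le (fun _ => abs_nonneg _) fun a => ?_
  calc |shiftTerm x t k a| = |x a| * (a.choose k * |t| ^ (a - k)) := by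
        rw [shiftTerm, abs_mul, abs_mul, abs_pow, Nat.abs_cast]
        ring
    _ ≤ |x a| * (1 + |t|) ^ a := by gcongr; exact choose_mul_pow_sub_le a k (abs_nonneg t)
    _ = |x a * (1 + |t|) ^ a| := by
        rw [abs_mul, abs_pow, abs_of_pos (by positivity : (0 : ℝ) < 1 + |t|)]

/-- Products and quasi-formal shifts: the quasi-formal shift by t of the Cauchy
product of two convergent formal power series equals the Cauchy product of their
quasi-formal shifts by t; all series involved converge absolutely. -/
theorem shift_of_cauchy_product (x y : ℕ → ℝ)
    (hx : ∀ c : ℝ, 0 < c → Tendsto (fun n => x n * c ^ n) atTop (𝓝 0))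
    (hy : ∀ c : ℝ, 0 < c → Tendsto (fun n => y n * c ^ n) atTop (𝓝 0))
    (t : ℝ) (z : ℕ → ℝ)
    (hz : ∀ n : ℕ, z n = ∑ k ∈ Finset.range (n + 1), x k * y (n - k)) :
    (∀ n : ℕ, Summable fun m : ℕ => |((n + m).choose n : ℝ) * z (n + m) * t ^ m|) ∧
    (∀ n : ℕ, Summable fun m : ℕ => |((n + m).choose n : ℝ) * x (n + m) * t ^ m|) ∧
    (∀ n : ℕ, Summable fun m : ℕ => |((n + m).choose n : ℝ) * y (n + m) * t ^ m|) ∧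
    ∀ n : ℕ,
      (∑' m : ℕ, ((n + m).choose n : ℝ) * z (n + m) * t ^ m) =
        ∑ k ∈ Finset.range (n + 1),
          (∑' m : ℕ, ((k + m).choose k : ℝ) * x (k + m) * t ^ m) *
            (∑' m : ℕ, (((n - k) + m).choose (n - k) : ℝ) * y ((n - k) + m) * t ^ m) := by
  have hxr := summable_abs_mul_pow_of_tendsto_mul_pow hx (1 + |t|)
  have hyr := summable_abs_mul_pow_of_tendsto_mul_pow hy (1 + |t|)
  have hzr : Summable fun n => |z n * (1 + |t|) ^ n| := by
    simpa only [hz] using summable_abs_cauchyProduct_mul_pow hxr hyr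
  have hxs := summable_abs_shiftTerm t hxr
  have hys := summable_abs_shiftTerm t hyr
  refine ⟨fun n => (summable_abs_shiftTerm_iff z t n).2 (summable_abs_shiftTerm t hzr n),
    fun n => (summable_abs_shiftTerm_iff x t n).2 (hxs n),
    fun n => (summable_abs_shiftTerm_iff y t n).2 (hys n), fun n => ?_⟩
  simp only [tsum_shiftTerm]
  calc ∑' s, shiftTerm z t n s
      = ∑' s, ∑ k ∈ range (n + 1), ∑ i ∈ range (s + 1),
          shiftTerm x t k i * shiftTerm y t (n - k) (s - i) :=
        tsum_congr (shiftTerm_cauchyProduct x y t hz n)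
    _ = ∑ k ∈ range (n + 1), ∑' s, ∑ i ∈ range (s + 1),
          shiftTerm x t k i * shiftTerm y t (n - k) (s - i) :=
        Summable.tsum_finsetSum fun k _ =>
          (summable_norm_sum_mul_range_of_summable_norm (f := shiftTerm x t k)
            (g := shiftTerm y t (n - k)) (hxs k) (hys (n - k))).of_norm
    _ = _ := sum_congr rfl fun k _ =>
        (tsum_mul_tsum_eq_tsum_sum_range_of_summable_norm (f := shiftTerm x t k)
          (g := shiftTerm y t (n - k)) (hxs k) (hys (n - k))).symm
end

section
/- There exists a function f : [0,1]_ℚ → ℝ such that: (i) f is uniformly continuous; (ii) f(a) < 1/√2 for every a ∈ [0,1]_ℚ, while f(a) → 1/√2 as a → 1/√2 within [0,1]_ℚ (so the extended value of f at 1/√2 equals 1/√2 and is a strict global maximum of the extension); and (iii) for every a ∈ [0,1]_ℚ the derivative f'(a) exists and equals 1. -/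
open Filter Topology

/-!
Take `f x = x - c (√2 x - 1)`, where `c` is a devil's staircase that is flat off the closure `K`
of the lacunary sums `∑_{i ∈ F} 2 ^ (-3 ^ (i + 1))` (`F` finite) and climbs by
`∑_{i ∈ F} 2 ^ (-(i + 1))` across them. It is uniformly continuous, vanishes on `(-∞, 0]` and
satisfies `c y ≥ y` on `(0, 1/2]`, so `f < 1/√2` on both sides of `1/√2` while `f (1/√2) = 1/√2`.
For rational `a ≠ 0`, the number `√2 a - 1` is a quadratic irrational, so by Liouville's bound
dyadics `u / 2 ^ M` approximate it no better than `C / 4 ^ M` for some `C > 0`; but each lacunary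
sum lies within `2 / 8 ^ M` of such a dyadic, its truncation with `M = 3 ^ (k + 1)`. So `√2 a - 1`
has positive distance from `K`, `c` is constant near it, and `f' (a) = 1`.
-/

open Finset Polynomial

namespace Counterexample

lemma sum_filter_le_half_pow_le (F : Finset ℕ) (t : ℕ) :
    ∑ i ∈ F with t ≤ i, (1 / 2 : ℝ) ^ i ≤ 2 * (1 / 2) ^ t := by
  have hsub : F.filter (t ≤ ·) ⊆ Ico t (F.sup id + 1) := fun i hi => by
    simp only [mem_filter] at hi
    exact mem_Ico.2 ⟨hi.2, Nat.lt_succ_of_le (le_sup (f := id) hi.1)⟩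
  calc ∑ i ∈ F with t ≤ i, (1 / 2 : ℝ) ^ i
      ≤ ∑ i ∈ Ico t (F.sup id + 1), (1 / 2 : ℝ) ^ i :=
        sum_le_sum_of_subset_of_nonneg hsub fun _ _ _ => by positivity
    _ ≤ (1 / 2) ^ t / (1 - 1 / 2) := geom_sum_Ico_le_of_lt_one (by norm_num) (by norm_num)
    _ = 2 * (1 / 2) ^ t := by ring

lemma sum_filter_lt_add_le_sum {F : Finset ℕ} {w : ℕ → ℝ} (hw : ∀ i, 0 ≤ w i) {j : ℕ}
    (hj : j ∈ F) : ∑ i ∈ F with i < j, w i + w j ≤ ∑ i ∈ F, w i := by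
  rw [← sum_filter_add_sum_filter_not F (· < j)]
  gcongr
  exact single_le_sum (fun i _ => hw i) (mem_filter.2 ⟨hj, lt_irrefl j⟩)

lemma sum_Ico_half_pow_succ (m n : ℕ) (h : m ≤ n) :
    ∑ i ∈ Ico m n, (1 / 2 : ℝ) ^ (i + 1) = (1 / 2) ^ m - (1 / 2) ^ n := by
  induction n, h using Nat.le_induction with
  | base => simp
  | succ n hmn ih => rw [sum_Ico_succ_top hmn, ih]; ring

noncomputable def lacunarySum (F : Finset ℕ) : ℝ := ∑ i ∈ F, (1 / 2 : ℝ) ^ 3 ^ (i + 1)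

noncomputable def binarySum (F : Finset ℕ) : ℝ := ∑ i ∈ F, (1 / 2 : ℝ) ^ (i + 1)

lemma lacunarySum_nonneg (F : Finset ℕ) : 0 ≤ lacunarySum F :=
  sum_nonneg fun _ _ => by positivity

lemma eq_empty_of_lacunarySum_nonpos {F : Finset ℕ} (h : lacunarySum F ≤ 0) : F = ∅ := by
  by_contra hF
  obtain ⟨j, hj⟩ := nonempty_iff_ne_empty.2 hF
  have := single_le_sum (f := fun i => (1 / 2 : ℝ) ^ 3 ^ (i + 1)) (fun _ _ => by positivity) hj
  simp only [lacunarySum] at h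
  linarith [show (0 : ℝ) < (1 / 2) ^ 3 ^ (j + 1) by positivity]

lemma binarySum_tail_le (F : Finset ℕ) (t : ℕ) :
    ∑ i ∈ F with t ≤ i, (1 / 2 : ℝ) ^ (i + 1) ≤ (1 / 2) ^ t := by
  simp_rw [pow_succ, ← sum_mul]
  linarith [sum_filter_le_half_pow_le F t]

lemma binarySum_le_one (F : Finset ℕ) : binarySum F ≤ 1 := by
  simpa [binarySum] using binarySum_tail_le F 0

lemma add_two_le_three_pow (i : ℕ) : i + 2 ≤ 3 ^ (i + 1) := by
  induction i with
  | zero => norm_num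
  | succ i ih => rw [pow_succ]; omega

lemma add_le_three_pow {t i : ℕ} (h : t ≤ i) : 3 ^ (t + 1) + (i - t) ≤ 3 ^ (i + 1) := by
  induction i, h using Nat.le_induction with
  | base => simp
  | succ i hti ih =>
    have : 1 ≤ 3 ^ (i + 1) := Nat.one_le_pow _ _ (by norm_num)
    rw [pow_succ 3 (i + 1)]
    omega

lemma lacunarySum_tail_le (F : Finset ℕ) (t : ℕ) :
    ∑ i ∈ F with t ≤ i, (1 / 2 : ℝ) ^ 3 ^ (i + 1) ≤ 2 * (1 / 2) ^ 3 ^ (t + 1) := by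
  have hterm : ∀ i ∈ F.filter (t ≤ ·),
      (1 / 2 : ℝ) ^ 3 ^ (i + 1) ≤ (1 / 2) ^ (3 ^ (t + 1) - t) * (1 / 2) ^ i := fun i hi => by
    rw [← pow_add]
    have := add_le_three_pow (mem_filter.1 hi).2
    have := add_two_le_three_pow t
    exact pow_le_pow_of_le_one (by norm_num) (by norm_num) (by omega)
  calc ∑ i ∈ F with t ≤ i, (1 / 2 : ℝ) ^ 3 ^ (i + 1)
      ≤ (1 / 2) ^ (3 ^ (t + 1) - t) * ∑ i ∈ F with t ≤ i, (1 / 2 : ℝ) ^ i := by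
        rw [mul_sum]; exact sum_le_sum hterm
    _ ≤ (1 / 2) ^ (3 ^ (t + 1) - t) * (2 * (1 / 2) ^ t) := by
        gcongr; exact sum_filter_le_half_pow_le F t
    _ = 2 * (1 / 2) ^ 3 ^ (t + 1) := by
        rw [mul_left_comm, ← pow_add, Nat.sub_add_cancel (by linarith [add_two_le_three_pow t])]

lemma sum_Ico_lacunary_le (j n : ℕ) :
    ∑ i ∈ Ico (j + 1) n, (1 / 2 : ℝ) ^ 3 ^ (i + 1) ≤ (1 / 2) ^ (3 ^ (j + 1) + 1) := by
  have htail := lacunarySum_tail_le (Ico (j + 1) n) (j + 1)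
  rw [filter_true_of_mem fun i hi => (mem_Ico.1 hi).1] at htail
  have hexp : 3 ^ (j + 1) + 2 ≤ 3 ^ (j + 1 + 1) := by
    rw [pow_succ 3 (j + 1)]; linarith [add_two_le_three_pow j]
  calc _ ≤ 2 * (1 / 2 : ℝ) ^ 3 ^ (j + 1 + 1) := htail
    _ ≤ 2 * (1 / 2) ^ (3 ^ (j + 1) + 2) := by
        linarith [pow_le_pow_of_le_one (a := (1 / 2 : ℝ)) (by norm_num) (by norm_num) hexp]
    _ = (1 / 2) ^ (3 ^ (j + 1) + 1) := by ring

/-- Drop the last element `j ≤ k` of `F` and everything after it, then add all of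
`(j, k + 1]`: the lacunary sum drops by at least `2 ^ (-3 ^ (k + 1) - 1)`, the binary sum by at
most `2 ^ (-k)`. -/
def predecessor (F : Finset ℕ) (j k : ℕ) : Finset ℕ := F.filter (· < j) ∪ Ico (j + 1) (k + 2)

lemma sum_predecessor (F : Finset ℕ) (j k : ℕ) (w : ℕ → ℝ) :
    ∑ i ∈ predecessor F j k, w i = ∑ i ∈ F with i < j, w i + ∑ i ∈ Ico (j + 1) (k + 2), w i :=
  sum_union <| disjoint_left.2 fun i hi hi' => by
    have := (mem_filter.1 hi).2; have := (mem_Ico.1 hi').1; omega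

lemma lacunarySum_predecessor_add_le {F : Finset ℕ} {j k : ℕ} (hjF : j ∈ F) (hjk : j ≤ k) :
    lacunarySum (predecessor F j k) + (1 / 2) ^ (3 ^ (k + 1) + 1) ≤ lacunarySum F := by
  have hF := sum_filter_lt_add_le_sum (w := fun i => (1 / 2 : ℝ) ^ 3 ^ (i + 1))
    (fun _ => by positivity) hjF
  have hgap : (1 / 2 : ℝ) ^ (3 ^ (k + 1) + 1) ≤ (1 / 2) ^ (3 ^ (j + 1) + 1) :=
    pow_le_pow_of_le_one (by norm_num) (by norm_num) (by gcongr; norm_num)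
  have hIco := sum_Ico_lacunary_le j (k + 2)
  rw [lacunarySum, lacunarySum, sum_predecessor]
  rw [pow_succ _ (3 ^ (j + 1))] at hgap hIco
  linarith

lemma binarySum_le_predecessor_add {F : Finset ℕ} {j k : ℕ}
    (hjmax : ∀ i ∈ F, i ≤ k → i ≤ j) (hjk : j ≤ k) :
    binarySum F ≤ binarySum (predecessor F j k) + (1 / 2) ^ k := by
  have hupper : F.filter (¬ · < j) ⊆ insert j (F.filter (k + 1 ≤ ·)) := fun i hi => by
    obtain ⟨hiF, hij⟩ := mem_filter.1 hi
    rcases (not_lt.1 hij).eq_or_lt with rfl | hji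
    · exact mem_insert_self _ _
    · exact mem_insert_of_mem (mem_filter.2 ⟨hiF, by
        by_contra h; linarith [hjmax i hiF (by omega)]⟩)
  have hrest : ∑ i ∈ F with ¬ i < j, (1 / 2 : ℝ) ^ (i + 1) ≤
      (1 / 2) ^ (j + 1) + (1 / 2) ^ (k + 1) :=
    calc _ ≤ ∑ i ∈ insert j (F.filter (k + 1 ≤ ·)), (1 / 2 : ℝ) ^ (i + 1) :=
          sum_le_sum_of_subset_of_nonneg hupper fun _ _ _ => by positivity
      _ = (1 / 2) ^ (j + 1) + ∑ i ∈ F with k + 1 ≤ i, (1 / 2 : ℝ) ^ (i + 1) :=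
          sum_insert fun h => by have := (mem_filter.1 h).2; omega
      _ ≤ (1 / 2) ^ (j + 1) + (1 / 2) ^ (k + 1) := by
          gcongr; exact binarySum_tail_le F (k + 1)
  have hsmall : (1 / 2 : ℝ) ^ (k + 1) + (1 / 2) ^ (k + 2) ≤ (1 / 2) ^ k := by
    rw [pow_succ, pow_succ, pow_succ]; nlinarith [pow_pos (by norm_num : (0 : ℝ) < 1 / 2) k]
  rw [binarySum, binarySum, sum_predecessor, sum_Ico_half_pow_succ _ _ (by omega),
    ← sum_filter_add_sum_filter_not F (· < j)]
  linarith

lemma binarySum_le_or_exists_lacunarySum_add_le (F : Finset ℕ) (k : ℕ) :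
    binarySum F ≤ (1 / 2) ^ k ∨ ∃ G, lacunarySum G + (1 / 2) ^ (3 ^ (k + 1) + 1) ≤ lacunarySum F ∧
      binarySum F ≤ binarySum G + (1 / 2) ^ k := by
  by_cases hFk : (F.filter (· ≤ k)).Nonempty
  · obtain ⟨hjF, hjk⟩ := mem_filter.1 ((F.filter (· ≤ k)).max'_mem hFk)
    have hjmax : ∀ i ∈ F, i ≤ k → i ≤ (F.filter (· ≤ k)).max' hFk :=
      fun i hi hik => le_max' _ _ (mem_filter.2 ⟨hi, hik⟩)
    exact .inr ⟨_, lacunarySum_predecessor_add_le hjF hjk, binarySum_le_predecessor_add hjmax hjk⟩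
  · rw [not_nonempty_iff_eq_empty, filter_eq_empty_iff] at hFk
    have htail := binarySum_tail_le F (k + 1)
    rw [filter_true_of_mem fun i hi => by have := hFk hi; omega] at htail
    exact .inl (htail.trans (pow_le_pow_of_le_one (by norm_num) (by norm_num) k.le_succ))

/-- A devil's staircase, locally constant off the closure of the range of `lacunarySum`. The `0`
keeps the supremum meaningful for `y < 0`, where no `F` qualifies. -/
noncomputable def staircase (y : ℝ) : ℝ := sSup (insert 0 (binarySum '' {F | lacunarySum F ≤ y}))

lemma bddAbove_staircase_set (y : ℝ) : BddAbove (insert 0 (binarySum '' {F | lacunarySum F ≤ y})) :=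
  ⟨1, by rintro _ (rfl | ⟨F, -, rfl⟩); exacts [zero_le_one, binarySum_le_one F]⟩

lemma staircase_nonneg (y : ℝ) : 0 ≤ staircase y :=
  le_csSup (bddAbove_staircase_set y) (Set.mem_insert 0 _)

lemma binarySum_le_staircase {F : Finset ℕ} {y : ℝ} (h : lacunarySum F ≤ y) :
    binarySum F ≤ staircase y :=
  le_csSup (bddAbove_staircase_set y) (Set.mem_insert_of_mem _ ⟨F, h, rfl⟩)

lemma staircase_le {y c : ℝ} (hc : 0 ≤ c) (h : ∀ F, lacunarySum F ≤ y → binarySum F ≤ c) :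
    staircase y ≤ c :=
  csSup_le (Set.insert_nonempty _ _) (by rintro _ (rfl | ⟨F, hF, rfl⟩); exacts [hc, h F hF])

lemma staircase_of_nonpos {y : ℝ} (hy : y ≤ 0) : staircase y = 0 :=
  le_antisymm (staircase_le le_rfl fun F hF => by
    simp [eq_empty_of_lacunarySum_nonpos (hF.trans hy), binarySum]) (staircase_nonneg y)

lemma staircase_le_add {y₁ y₂ : ℝ} (k : ℕ) (h : y₂ ≤ y₁ + (1 / 2) ^ (3 ^ (k + 1) + 1)) :
    staircase y₂ ≤ staircase y₁ + (1 / 2) ^ k := by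
  refine staircase_le (by positivity [staircase_nonneg y₁]) fun F hF => ?_
  rcases binarySum_le_or_exists_lacunarySum_add_le F k with hsmall | ⟨G, hGF, hFG⟩
  · linarith [staircase_nonneg y₁]
  · linarith [binarySum_le_staircase (show lacunarySum G ≤ y₁ by linarith)]

lemma uniformContinuous_staircase : UniformContinuous staircase := by
  refine Metric.uniformContinuous_iff_le.2 fun ε hε => ?_
  obtain ⟨k, hk⟩ := exists_pow_lt_of_lt_one hε (by norm_num : (1 / 2 : ℝ) < 1)
  refine ⟨(1 / 2) ^ (3 ^ (k + 1) + 1), by positivity, fun y₁ y₂ h => ?_⟩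
  rw [Real.dist_eq, abs_sub_le_iff] at h ⊢
  constructor <;> linarith [staircase_le_add (y₁ := y₁) (y₂ := y₂) k (by linarith),
    staircase_le_add (y₁ := y₂) (y₂ := y₁) k (by linarith)]

lemma staircase_eventually_eq {y₀ ρ : ℝ} (hρ : 0 < ρ) (h : ∀ F, ρ ≤ |lacunarySum F - y₀|) :
    ∀ᶠ y in 𝓝 y₀, staircase y = staircase y₀ := by
  filter_upwards [Metric.ball_mem_nhds y₀ hρ] with y hy
  rw [Metric.mem_ball, Real.dist_eq] at hy
  have hset : {F | lacunarySum F ≤ y} = {F | lacunarySum F ≤ y₀} := Set.ext fun F => by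
    have := h F
    rw [le_abs'] at this
    change lacunarySum F ≤ y ↔ lacunarySum F ≤ y₀
    rw [abs_lt] at hy
    constructor <;> intro <;> rcases this with h | h <;> linarith
  rw [staircase, staircase, hset]

lemma le_staircase {y : ℝ} (h0 : 0 < y) (h1 : y ≤ 1 / 2) : y ≤ staircase y := by
  obtain ⟨j, hj, hj'⟩ := exists_nat_pow_near_of_lt_one (x := 2 * y) (by linarith) (by linarith)
    (by norm_num : (0 : ℝ) < 1 / 2) (by norm_num)
  have hlac : lacunarySum {j} ≤ y := by
    have := pow_le_pow_of_le_one (a := (1 / 2 : ℝ)) (by norm_num) (by norm_num)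
      (add_two_le_three_pow j)
    rw [lacunarySum, sum_singleton]
    rw [pow_add (1 / 2 : ℝ) j 2] at this; rw [pow_succ (1 / 2 : ℝ) j] at hj
    linarith
  have := binarySum_le_staircase hlac
  rw [binarySum, sum_singleton, pow_succ (1 / 2 : ℝ) j] at this
  linarith

lemma exists_sum_filter_le_eq_div (F : Finset ℕ) (k : ℕ) :
    ∃ u : ℕ, ∑ i ∈ F with i ≤ k, (1 / 2 : ℝ) ^ 3 ^ (i + 1) = u / 2 ^ 3 ^ (k + 1) := by
  refine ⟨∑ i ∈ F with i ≤ k, 2 ^ (3 ^ (k + 1) - 3 ^ (i + 1)), ?_⟩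
  push_cast
  rw [sum_div]
  refine sum_congr rfl fun i hi => ?_
  have hik : 3 ^ (i + 1) ≤ 3 ^ (k + 1) :=
    Nat.pow_le_pow_right (by norm_num) (Nat.succ_le_succ (mem_filter.1 hi).2)
  rw [pow_sub₀ _ two_ne_zero hik, one_div_pow]
  field_simp

lemma exists_le_abs_lacunarySum_sub {α : ℝ} (hα : Irrational α) {p : ℤ[X]} (hp : p ≠ 0)
    (hdeg : p.natDegree ≤ 2) (hroot : eval α (map (algebraMap ℤ ℝ) p) = 0) :
    ∃ ρ > 0, ∀ F, ρ ≤ |lacunarySum F - α| := by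
  obtain ⟨A, hA, hliouville⟩ := Liouville.exists_pos_real_of_irrational_root hα hp hroot
  obtain ⟨k, hk⟩ := pow_unbounded_of_one_lt (4 * A) (by norm_num : (1 : ℝ) < 2)
  set Q : ℝ := 2 ^ 3 ^ (k + 1) with hQ
  have hQ1 : 1 ≤ Q := one_le_pow₀ (by norm_num)
  have hAQ : 4 * A ≤ Q := hk.le.trans (pow_le_pow_right₀ (by norm_num)
    (by linarith [add_two_le_three_pow k]))
  refine ⟨1 / (2 * A * Q ^ 2), by positivity, fun F => ?_⟩
  obtain ⟨u, hu⟩ := exists_sum_filter_le_eq_div F k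
  have happrox : 1 / (A * Q ^ 2) ≤ |α - u / Q| := by
    have h := hliouville u (2 ^ 3 ^ (k + 1) - 1)
    rw [Nat.cast_sub Nat.one_le_two_pow, Nat.cast_pow, Nat.cast_two, Nat.cast_one,
      sub_add_cancel, ← hQ, Int.cast_natCast] at h
    rw [div_le_iff₀ (by positivity)]
    calc 1 ≤ Q ^ p.natDegree * (|α - u / Q| * A) := h
      _ ≤ Q ^ 2 * (|α - u / Q| * A) := by gcongr
      _ = |α - u / Q| * (A * Q ^ 2) := by ring
  have htail : |lacunarySum F - u / Q| ≤ 2 / Q ^ 3 := by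
    have h := lacunarySum_tail_le F (k + 1)
    rw [lacunarySum, ← hu, ← sum_filter_add_sum_filter_not F (· ≤ k), add_sub_cancel_left,
      abs_of_nonneg (sum_nonneg fun _ _ => by positivity)]
    simp_rw [not_le, Nat.lt_iff_add_one_le] at h ⊢
    have hQ3 : 2 * (1 / 2 : ℝ) ^ 3 ^ (k + 1 + 1) = 2 / Q ^ 3 := by
      rw [hQ, pow_succ 3 (k + 1), pow_mul, one_div_pow, one_div_pow, mul_one_div]
    rwa [hQ3] at h
  have hgap : 2 / Q ^ 3 ≤ 1 / (2 * A * Q ^ 2) := by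
    rw [div_le_div_iff₀ (by positivity) (by positivity)]
    nlinarith [pow_pos (by linarith : (0 : ℝ) < Q) 2]
  calc 1 / (2 * A * Q ^ 2) = 1 / (A * Q ^ 2) - 1 / (2 * A * Q ^ 2) := by field_simp; ring
    _ ≤ |α - u / Q| - |lacunarySum F - u / Q| := by linarith
    _ ≤ |lacunarySum F - α| := by
      linarith [abs_sub_le α (lacunarySum F) (u / Q), abs_sub_comm α (lacunarySum F)]

lemma exists_le_abs_lacunarySum_sub_sqrt_two_mul (a : ℚ) :
    ∃ ρ > 0, ∀ F, ρ ≤ |lacunarySum F - (√2 * a - 1)| := by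
  by_cases ha : a = 0
  · refine ⟨1, one_pos, fun F => ?_⟩
    rw [ha, Rat.cast_zero, mul_zero, zero_sub, sub_neg_eq_add,
      abs_of_nonneg (by linarith [lacunarySum_nonneg F])]
    linarith [lacunarySum_nonneg F]
  · have hnum : (a.num : ℝ) = a * a.den := by exact_mod_cast (Rat.mul_den_eq_num a).symm
    have hdeg : (C ((a.den : ℤ) ^ 2) * (X + 1) ^ 2 - C (2 * a.num ^ 2) : ℤ[X]).natDegree = 2 := by
      compute_degree!
    refine exists_le_abs_lacunarySum_sub ?_ (ne_zero_of_natDegree_gt (n := 0) (by omega))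
      hdeg.le ?_
    · simpa using (irrational_sqrt_two.mul_ratCast ha).sub_natCast 1
    · simp only [algebraMap_int_eq, eq_intCast, Int.cast_pow, Int.cast_natCast, Int.cast_mul,
        Int.cast_ofNat, Polynomial.map_sub, Polynomial.map_mul, Polynomial.map_pow,
        Polynomial.map_natCast, Polynomial.map_add, map_X, Polynomial.map_one, Polynomial.map_ofNat,
        Polynomial.map_intCast, eval_sub, eval_mul, eval_pow, eval_natCast, eval_add, eval_X,
        eval_one, sub_add_cancel, eval_ofNat, eval_intCast, hnum]
      linear_combination (a * a.den : ℝ) ^ 2 * Real.sq_sqrt zero_le_two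

noncomputable def shearedStaircase (x : ℝ) : ℝ := x - staircase (√2 * x - 1)

lemma uniformContinuous_shearedStaircase : UniformContinuous shearedStaircase :=
  uniformContinuous_id.sub <| uniformContinuous_staircase.comp <|
    Real.uniformContinuous_const_mul.sub uniformContinuous_const

lemma shearedStaircase_inv_sqrt_two : shearedStaircase (1 / √2) = 1 / √2 := by
  rw [shearedStaircase, mul_one_div_cancel (by positivity), sub_self, staircase_of_nonpos le_rfl,
    sub_zero]

lemma shearedStaircase_lt (a : ℚ) (ha : (a : ℝ) ≤ 1) : shearedStaircase a < 1 / √2 := by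
  have hsq : √2 * √2 = 2 := Real.mul_self_sqrt zero_le_two
  have hne : √2 * a - 1 ≠ 0 := fun h => by
    have ha0 : (a : ℝ) ≠ 0 := fun h0 => by simp [h0] at h
    exact irrational_sqrt_two.ne_rat a⁻¹ (by push_cast; field_simp; linarith)
  rw [shearedStaircase, lt_div_iff₀ (by positivity)]
  rcases hne.lt_or_gt with hy | hy
  · nlinarith [staircase_nonneg (√2 * a - 1), Real.sqrt_nonneg 2]
  · have hy' : √2 * a - 1 ≤ 1 / 2 := by
      nlinarith [mul_le_mul_of_nonneg_left ha (Real.sqrt_nonneg 2), Real.sqrt_two_lt_three_halves]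
    nlinarith [mul_pos hy (sub_pos.2 Real.one_lt_sqrt_two),
      mul_le_mul_of_nonneg_right (le_staircase hy hy') (Real.sqrt_nonneg 2)]

lemma shearedStaircase_eventually_sub_eq (a : ℚ) :
    ∀ᶠ x in 𝓝 (a : ℝ), shearedStaircase x - shearedStaircase a = x - a := by
  obtain ⟨ρ, hρ, hdist⟩ := exists_le_abs_lacunarySum_sub_sqrt_two_mul a
  have hcont : Tendsto (fun x : ℝ => √2 * x - 1) (𝓝 a) (𝓝 (√2 * a - 1)) :=
    ((continuous_const.mul continuous_id).sub continuous_const).tendsto _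
  filter_upwards [hcont.eventually (staircase_eventually_eq hρ hdist)] with x hx
  rw [shearedStaircase, shearedStaircase, hx]
  ring

end Counterexample

lemma UC.of_uniformContinuous {g : ℝ → ℝ} (hg : UniformContinuous g) (M : Set ℚ) :
    UC M (fun a => g a) := fun ε hε => by
  obtain ⟨δ, hδ, h⟩ := Metric.uniformContinuous_iff_le.1 hg ε hε
  exact ⟨δ, hδ, fun a _ b _ hab => h hab⟩

lemma ExtVal.of_continuousAt {g : ℝ → ℝ} {x : ℝ} (hg : ContinuousAt g x) (M : Set ℚ) :
    ExtVal M (fun a => g a) x (g x) := fun _ _ ha => hg.tendsto.comp ha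

lemma HasDerivAtPt.one_of_eventually_sub_eq {g : ℝ → ℝ} {a : ℚ}
    (h : ∀ᶠ x in 𝓝 (a : ℝ), g x - g a = x - a) (M : Set ℚ) :
    HasDerivAtPt M (fun b => g b) a 1 := fun ε hε => by
  obtain ⟨δ, hδ, hball⟩ := Metric.eventually_nhds_iff.1 h
  refine ⟨δ / 2, half_pos hδ, fun b _ hpos hle => ?_⟩
  rw [hball (by rw [Real.dist_eq]; linarith), div_self (abs_pos.1 hpos), sub_self, abs_zero]
  exact hε.le

open Counterexample

/-- A counter-intuitive HMC real function: a uniformly continuous f : [0,1]_ℚ → ℝ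
with all values strictly below 1/√2, extended value 1/√2 at the irrational point
1/√2 (hence a strict global maximum of the extension), and derivative equal to 1
at every point of [0,1]_ℚ. -/
theorem counterintuitive_function :
    ∃ f : ℚ → ℝ,
      UC (RatIcc 0 1) f ∧
      (∀ a ∈ RatIcc 0 1, f a < 1 / Real.sqrt 2) ∧
      ExtVal (RatIcc 0 1) f (1 / Real.sqrt 2) (1 / Real.sqrt 2) ∧
      (∀ a ∈ RatIcc 0 1, HasDerivAtPt (RatIcc 0 1) f a 1) := by
  have hext := ExtVal.of_continuousAt
    uniformContinuous_shearedStaircase.continuous.continuousAt (RatIcc 0 1) (x := 1 / √2)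
  rw [shearedStaircase_inv_sqrt_two] at hext
  exact ⟨fun a => shearedStaircase a,
    UC.of_uniformContinuous uniformContinuous_shearedStaircase _,
    fun a ha => shearedStaircase_lt a ha.2, hext,
    fun a _ => HasDerivAtPt.one_of_eventually_sub_eq (shearedStaircase_eventually_sub_eq a) _⟩
end
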